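/- arXiv:2107.10305 — 4 statements merged into one kernel-verified Lean document; each statement's English description precedes it below -/
import Mathlib

section
/- Let L be an algebraically closed field, V a finite-dimensional L-vector space with basis v_1, …, v_n, and G a group acting on V by L-linear automorphisms. Let Δ : V → L be a G-invariant function, i.e. Δ(g·v) = Δ(v) for all g ∈ G and v ∈ V. Let λ, μ : Lˣ → G be group homomorphisms and γ_1, …, γ_n, δ_1, …, δ_n integers such that λ(t)·v_i = t^{γ_i} v_i and μ(t)·v_i = t^{δ_i} v_i for all t ∈ Lˣ and all i, and suppose there exists n₀ ∈ G with n₀ λ(t) n₀⁻¹ = μ(t) for all t ∈ Lˣ. If Δ vanishes identically on span_L{v_i : γ_i ≥ 0}, then Δ vanishes identically on span_L{v_i : δ_i ≥ 0}. -/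
/-
STATEMENT 0 (Lemma 2.2 of the paper): Let L be an algebraically closed field, V a
finite-dimensional L-vector space with basis v_1, …, v_n, and G a group acting on V by
L-linear automorphisms (given by a homomorphism ρ : G →* (V ≃ₗ[L] V)). Let Δ : V → L be
a G-invariant function. Let λ, μ : Lˣ → G be group homomorphisms with integer weights
γ_i, δ_i on the basis, and suppose μ is conjugate to λ by some n₀ ∈ G. If Δ vanishes on
span{v_i : γ_i ≥ 0}, then Δ vanishes on span{v_i : δ_i ≥ 0}.
-/
theorem stable_vectors_weyl_conjugate_vanishing
    {L : Type*} [Field L] [IsAlgClosed L]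
    {V : Type*} [AddCommGroup V] [Module L V]
    {G : Type*} [Group G]
    {n : ℕ} (b : Module.Basis (Fin n) L V)
    (ρ : G →* (V ≃ₗ[L] V))
    (Δ : V → L) (hΔ : ∀ (g : G) (v : V), Δ (ρ g v) = Δ v)
    (lam mu : Lˣ →* G) (γ δ : Fin n → ℤ)
    (hlam : ∀ (t : Lˣ) (i : Fin n), ρ (lam t) (b i) = ((t ^ γ i : Lˣ) : L) • b i)
    (hmu : ∀ (t : Lˣ) (i : Fin n), ρ (mu t) (b i) = ((t ^ δ i : Lˣ) : L) • b i)
    (n₀ : G) (hn₀ : ∀ t : Lˣ, n₀ * lam t * n₀⁻¹ = mu t)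
    (hvanish : ∀ v ∈ Submodule.span L (⇑b '' {i | 0 ≤ γ i}), Δ v = 0) :
    ∀ v ∈ Submodule.span L (⇑b '' {i | 0 ≤ δ i}), Δ v = 0 := by
  classical
  intro v hv
  set u : V := ρ n₀⁻¹ v with hu
  -- coordinates of v vanish on negative δ-weights
  have hc : ∀ j, δ j < 0 → b.repr v j = 0 := by
    intro j hj
    by_contra h
    have := b.mem_span_image.1 hv (Finsupp.mem_support_iff.2 h)
    simp only [Set.mem_setOf_eq] at this
    omega
  -- the weight computation for a general weight action
  have reprA : ∀ (τ : Lˣ →* G) (e : Fin n → ℤ),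
      (∀ (t : Lˣ) (j : Fin n), ρ (τ t) (b j) = ((t ^ e j : Lˣ) : L) • b j) →
      ∀ (t : Lˣ) (w : V), ρ (τ t) w = ∑ j, (b.repr w j * ((t ^ e j : Lˣ) : L)) • b j := by
    intro τ e he t w
    conv_lhs => rw [← b.sum_repr w]
    rw [map_sum]
    refine Finset.sum_congr rfl fun j _ => ?_
    rw [map_smul, he, smul_smul]
  -- conjugation relation
  have hconj : ∀ t : Lˣ, lam t = n₀⁻¹ * mu t * n₀ := by
    intro t
    rw [← hn₀ t]
    group
  -- ρ(n₀) u = v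
  have hρuv : ρ n₀ u = v := by
    have : (ρ n₀) ((ρ n₀⁻¹) v) = (ρ n₀ * ρ n₀⁻¹) v := rfl
    rw [hu, this, ← map_mul, mul_inv_cancel, map_one]
    rfl
  -- key claim : u ∈ span{γ ≥ 0}
  have key : u ∈ Submodule.span L (⇑b '' {i | 0 ≤ γ i}) := by
    rw [Module.Basis.mem_span_image]
    intro i hi
    rw [Finset.mem_coe, Finsupp.mem_support_iff] at hi
    simp only [Set.mem_setOf_eq]
    by_contra hγ
    push_neg at hγ
    apply hi
    -- the main identity: for all t, t^{γ i} * (b.repr u i) = ∑ j, ...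
    have main : ∀ t : Lˣ, ((t ^ γ i : Lˣ) : L) * b.repr u i =
        ∑ j, (b.repr v j * ((t ^ δ j : Lˣ) : L)) * b.repr (ρ n₀⁻¹ (b j)) i := by
      intro t
      have h1 : ρ (lam t) u = ρ n₀⁻¹ (ρ (mu t) v) := by
        rw [hconj t]
        have e1 : ρ (n₀⁻¹ * mu t * n₀) u = (ρ n₀⁻¹ * ρ (mu t) * ρ n₀) u := by
          rw [← map_mul, ← map_mul]
        have e2 : (ρ n₀⁻¹ * ρ (mu t) * ρ n₀) u = ρ n₀⁻¹ (ρ (mu t) (ρ n₀ u)) := rfl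
        rw [e1, e2, hρuv]
      have h2 : b.repr (ρ (lam t) u) i = ((t ^ γ i : Lˣ) : L) * b.repr u i := by
        rw [reprA lam γ hlam t u, map_sum, Finsupp.finset_sum_apply]
        simp only [map_smul, Module.Basis.repr_self, Finsupp.smul_apply, Finsupp.single_apply,
          smul_eq_mul]
        rw [Finset.sum_eq_single i]
        · simp [mul_comm]
        · intro j _ hj; simp [hj]
        · intro h; exact absurd (Finset.mem_univ i) h
      have h3 : b.repr (ρ n₀⁻¹ (ρ (mu t) v)) i =
          ∑ j, (b.repr v j * ((t ^ δ j : Lˣ) : L)) * b.repr (ρ n₀⁻¹ (b j)) i := by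
        rw [reprA mu δ hmu t v, map_sum, map_sum, Finsupp.finset_sum_apply]
        refine Finset.sum_congr rfl fun j _ => ?_
        rw [map_smul, map_smul, Finsupp.smul_apply, smul_eq_mul]
      rw [← h2, h1, h3]
    -- rearrange: b.repr u i = ∑ j, c j M j t^{(δ j - γ i).toNat}
    have main2 : ∀ t : Lˣ, b.repr u i =
        ∑ j, (b.repr v j * b.repr (ρ n₀⁻¹ (b j)) i) * (t : L) ^ (δ j - γ i).toNat := by
      intro t
      have htne : ((t ^ γ i : Lˣ) : L) ≠ 0 := Units.ne_zero _
      apply mul_left_cancel₀ htne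
      rw [main t, Finset.mul_sum]
      refine Finset.sum_congr rfl fun j _ => ?_
      by_cases hcj : b.repr v j = 0
      · simp [hcj]
      · have hδj : 0 ≤ δ j := le_of_not_gt fun h => hcj (hc j h)
        have hexp : (0:ℤ) ≤ δ j - γ i := by omega
        have e1 : ((t ^ δ j : Lˣ) : L) = (t:L) ^ δ j := by exact_mod_cast rfl
        have e2 : ((t ^ γ i : Lˣ) : L) = (t:L) ^ γ i := by exact_mod_cast rfl
        have e3 : (t:L) ^ (δ j - γ i).toNat = (t:L) ^ (δ j - γ i) := by
          rw [← zpow_natCast, Int.toNat_of_nonneg hexp]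
        have e4 : (t:L) ^ (δ j) = (t:L) ^ (δ j - γ i) * (t:L) ^ (γ i) := by
          rw [← zpow_add₀ (Units.ne_zero t)]
          ring_nf
        rw [e1, e2, e3, e4]
        ring
    -- build the polynomial
    set P : Polynomial L :=
      (∑ j, Polynomial.C (b.repr v j * b.repr (ρ n₀⁻¹ (b j)) i) *
        Polynomial.X ^ (δ j - γ i).toNat) - Polynomial.C (b.repr u i) with hP
    have hroots : ∀ x : L, x ≠ 0 → P.IsRoot x := by
      intro x hx
      have := main2 (Units.mk0 x hx)
      simp only [Units.val_mk0] at this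
      simp only [Polynomial.IsRoot, hP, Polynomial.eval_sub, Polynomial.eval_finset_sum,
        Polynomial.eval_mul, Polynomial.eval_C, Polynomial.eval_pow, Polynomial.eval_X]
      rw [← this]
      ring
    have hPzero : P = 0 := by
      apply Polynomial.eq_zero_of_infinite_isRoot
      apply Set.Infinite.mono (s := {x : L | x ≠ 0})
      · exact fun x hx => hroots x hx
      · exact Set.Finite.infinite_compl (Set.finite_singleton 0)
    have hcoeff := congrArg (fun q => Polynomial.coeff q 0) hPzero
    simp only [hP, Polynomial.coeff_sub, Polynomial.finset_sum_coeff, Polynomial.coeff_C_mul,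
      Polynomial.coeff_X_pow, Polynomial.coeff_C, Polynomial.coeff_zero] at hcoeff
    have hsum : ∀ j ∈ Finset.univ (α := Fin n),
        b.repr v j * b.repr (ρ n₀⁻¹ (b j)) i *
          (if (0:ℕ) = (δ j - γ i).toNat then (1:L) else 0) = 0 := by
      intro j _
      by_cases hcj : b.repr v j = 0
      · simp [hcj]
      · have hδj : 0 ≤ δ j := le_of_not_gt fun h => hcj (hc j h)
        have : (δ j - γ i).toNat ≠ 0 := by omega
        simp [Ne.symm this]
    rw [Finset.sum_eq_zero hsum] at hcoeff
    simpa using hcoeff.symm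
  rw [← hρuv, hΔ]
  exact hvanish u key
end

section
/- In the polynomial ring ℤ[a,b,d,e,g,h,j,k,o,r], set β₁ = 4adg−gj², β₂ = 4bdg+4aeg+4adh−hj²−2gjk, β₃ = 4beg+4bdh+4aeh−2hjk−gk², β₄ = 4beh−hk², β₅ = −ar²−do²+ojr, β₆ = −br²−eo²+okr, F₁(X,Y) = β₁X³+β₂X²Y+β₃XY²+β₄Y³ and F₂(X,Y) = β₅X+β₆Y. Then every coefficient of the binary quartic discriminant disc₄ applied to the product F₁·F₂ is divisible by 16; that is, disc₄(F₁F₂) ∈ 16·ℤ[a,b,d,e,g,h,j,k,o,r]. -/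
/- The discriminant of the binary quartic A X⁴ + B X³Y + C X²Y² + D XY³ + E Y⁴. -/
def disc4 {R : Type*} [CommRing R] (A B C D E : R) : R :=
  B ^ 2 * C ^ 2 * D ^ 2 - 4 * B ^ 2 * C ^ 3 * E - 4 * B ^ 3 * D ^ 3 + 18 * B ^ 3 * C * D * E
       - 27 * B ^ 4 * E ^ 2 - 4 * A * C ^ 3 * D ^ 2 + 16 * A * C ^ 4 * E + 18 * A * B * C * D ^ 3
       - 80 * A * B * C ^ 2 * D * E - 6 * A * B ^ 2 * D ^ 2 * E + 144 * A * B ^ 2 * C * E ^ 2 - 27 * A ^ 2 * D ^ 4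
       + 144 * A ^ 2 * C * D ^ 2 * E - 128 * A ^ 2 * C ^ 2 * E ^ 2 - 192 * A ^ 2 * B * D * E ^ 2 + 256 * A ^ 3 * E ^ 3

/- The polynomials β₁, …, β₆ of the paper, as integer polynomials in the ten
coordinates a, b, d, e, g, h, j, k, o, r of V₆ (indices 0,…,9 in that order). -/
noncomputable def beta1 : MvPolynomial (Fin 10) ℤ :=
  4 * MvPolynomial.X 0 * MvPolynomial.X 2 * MvPolynomial.X 4 - MvPolynomial.X 4 * MvPolynomial.X 6 ^ 2
noncomputable def beta2 : MvPolynomial (Fin 10) ℤ :=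
  4 * MvPolynomial.X 1 * MvPolynomial.X 2 * MvPolynomial.X 4 + 4 * MvPolynomial.X 0 * MvPolynomial.X 3 * MvPolynomial.X 4 + 4 * MvPolynomial.X 0 * MvPolynomial.X 2 * MvPolynomial.X 5 - MvPolynomial.X 5 * MvPolynomial.X 6 ^ 2
    - 2 * MvPolynomial.X 4 * MvPolynomial.X 6 * MvPolynomial.X 7
noncomputable def beta3 : MvPolynomial (Fin 10) ℤ :=
  4 * MvPolynomial.X 1 * MvPolynomial.X 3 * MvPolynomial.X 4 + 4 * MvPolynomial.X 1 * MvPolynomial.X 2 * MvPolynomial.X 5 + 4 * MvPolynomial.X 0 * MvPolynomial.X 3 * MvPolynomial.X 5 - 2 * MvPolynomial.X 5 * MvPolynomial.X 6 * MvPolynomial.X 7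
    - MvPolynomial.X 4 * MvPolynomial.X 7 ^ 2
noncomputable def beta4 : MvPolynomial (Fin 10) ℤ :=
  4 * MvPolynomial.X 1 * MvPolynomial.X 3 * MvPolynomial.X 5 - MvPolynomial.X 5 * MvPolynomial.X 7 ^ 2
noncomputable def beta5 : MvPolynomial (Fin 10) ℤ :=
  -MvPolynomial.X 0 * MvPolynomial.X 9 ^ 2 - MvPolynomial.X 2 * MvPolynomial.X 8 ^ 2 + MvPolynomial.X 8 * MvPolynomial.X 6 * MvPolynomial.X 9
noncomputable def beta6 : MvPolynomial (Fin 10) ℤ :=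
  -MvPolynomial.X 1 * MvPolynomial.X 9 ^ 2 - MvPolynomial.X 3 * MvPolynomial.X 8 ^ 2 + MvPolynomial.X 8 * MvPolynomial.X 7 * MvPolynomial.X 9


section Aux
open MvPolynomial

private theorem disc4_key {R : Type*} [CommRing R] (g h q1 q2 q3 p5 p6 : R) :
    disc4 (g*q1*p5) (g*q1*p6+(g*q2+h*q1)*p5) ((g*q2+h*q1)*p6+(g*q3+h*q2)*p5)
        ((g*q3+h*q2)*p6+h*q3*p5) (h*q3*p6)
    = (q2^2-4*q1*q3) * ((q1*h^2-q2*g*h+q3*g^2)*(q1*p6^2-q2*p5*p6+q3*p5^2)*(g*p6-h*p5))^2 := by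
  simp only [disc4]; ring

private abbrev R10 := MvPolynomial (Fin 10) ℤ

private noncomputable def qq1 : R10 := 4 * X 0 * X 2 - X 6 ^ 2
private noncomputable def qq2 : R10 := 4 * X 0 * X 3 + 4 * X 1 * X 2 - 2 * X 6 * X 7
private noncomputable def qq3 : R10 := 4 * X 1 * X 3 - X 7 ^ 2
private noncomputable def MM : R10 :=
  (X 0 * X 3 + X 1 * X 2) ^ 2 - (X 0 * X 3 + X 1 * X 2) * X 6 * X 7
    - 4 * X 0 * X 1 * X 2 * X 3 + X 0 * X 2 * X 7 ^ 2 + X 1 * X 3 * X 6 ^ 2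

private lemma hb1 : beta1 = X 4 * qq1 := by unfold beta1 qq1; ring
private lemma hb2 : beta2 = X 4 * qq2 + X 5 * qq1 := by unfold beta2 qq1 qq2; ring
private lemma hb3 : beta3 = X 4 * qq3 + X 5 * qq2 := by unfold beta3 qq2 qq3; ring
private lemma hb4 : beta4 = X 5 * qq3 := by unfold beta4 qq3; ring
private lemma hdisc2 : qq2 ^ 2 - 4 * qq1 * qq3 = 16 * MM := by unfold qq1 qq2 qq3 MM; ring

private lemma mono1 (c : R10) : (C c * X 0 ^ 4 : MvPolynomial ℕ R10)
    = monomial (Finsupp.single 0 4) c := by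
  rw [X_pow_eq_monomial, C_mul_monomial, mul_one]
private lemma mono2 (c : R10) : (C c * (X 0 ^ 3 * X 1) : MvPolynomial ℕ R10)
    = monomial (Finsupp.single 0 3 + Finsupp.single 1 1) c := by
  rw [X_pow_eq_monomial, X, monomial_mul, C_mul_monomial, one_mul, mul_one]
private lemma mono3 (c : R10) : (C c * (X 0 ^ 2 * X 1 ^ 2) : MvPolynomial ℕ R10)
    = monomial (Finsupp.single 0 2 + Finsupp.single 1 2) c := by
  rw [X_pow_eq_monomial, X_pow_eq_monomial, monomial_mul, C_mul_monomial, one_mul, mul_one]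
private lemma mono4 (c : R10) : (C c * (X 0 * X 1 ^ 3) : MvPolynomial ℕ R10)
    = monomial (Finsupp.single 0 1 + Finsupp.single 1 3) c := by
  rw [X_pow_eq_monomial, X, monomial_mul, C_mul_monomial, one_mul, mul_one]
private lemma mono5 (c : R10) : (C c * X 1 ^ 4 : MvPolynomial ℕ R10)
    = monomial (Finsupp.single 1 4) c := by
  rw [X_pow_eq_monomial, C_mul_monomial, mul_one]

private noncomputable def monSum (A B Cc D E : R10) : MvPolynomial ℕ R10 :=
  monomial (Finsupp.single 0 4) A + monomial (Finsupp.single 0 3 + Finsupp.single 1 1) B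
    + monomial (Finsupp.single 0 2 + Finsupp.single 1 2) Cc
    + monomial (Finsupp.single 0 1 + Finsupp.single 1 3) D
    + monomial (Finsupp.single 1 4) E

private lemma prod_eq :
    ((C beta1 * X 0 ^ 3 + C beta2 * X 0 ^ 2 * X 1 + C beta3 * X 0 * X 1 ^ 2
        + C beta4 * X 1 ^ 3) * (C beta5 * X 0 + C beta6 * X 1) : MvPolynomial ℕ R10)
    = monSum (beta1*beta5) (beta1*beta6+beta2*beta5) (beta2*beta6+beta3*beta5)
        (beta3*beta6+beta4*beta5) (beta4*beta6) := by
  unfold monSum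
  rw [← mono1, ← mono2, ← mono3, ← mono4, ← mono5]
  simp only [map_add, map_mul]
  ring

private lemma neY {f g : ℕ →₀ ℕ} (h : f 1 ≠ g 1) : f ≠ g :=
  fun e => h (by rw [e])

private lemma coeffA (A B Cc D E : R10) :
    MvPolynomial.coeff (Finsupp.single 0 4) (monSum A B Cc D E) = A := by
  simp only [monSum, coeff_add, coeff_monomial]
  rw [if_neg (neY (by simp [Finsupp.single_apply])),
    if_neg (neY (by simp [Finsupp.single_apply])),
    if_neg (neY (by simp [Finsupp.single_apply])),
    if_neg (neY (by simp [Finsupp.single_apply]))]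
  simp
private lemma coeffB (A B Cc D E : R10) :
    MvPolynomial.coeff (Finsupp.single 0 3 + Finsupp.single 1 1) (monSum A B Cc D E) = B := by
  simp only [monSum, coeff_add, coeff_monomial]
  rw [if_neg (neY (by simp [Finsupp.single_apply])),
    if_neg (neY (by simp [Finsupp.single_apply])),
    if_neg (neY (by simp [Finsupp.single_apply])),
    if_neg (neY (by simp [Finsupp.single_apply]))]
  simp
private lemma coeffC (A B Cc D E : R10) :
    MvPolynomial.coeff (Finsupp.single 0 2 + Finsupp.single 1 2) (monSum A B Cc D E) = Cc := by
  simp only [monSum, coeff_add, coeff_monomial]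
  rw [if_neg (neY (by simp [Finsupp.single_apply])),
    if_neg (neY (by simp [Finsupp.single_apply])),
    if_neg (neY (by simp [Finsupp.single_apply])),
    if_neg (neY (by simp [Finsupp.single_apply]))]
  simp
private lemma coeffD (A B Cc D E : R10) :
    MvPolynomial.coeff (Finsupp.single 0 1 + Finsupp.single 1 3) (monSum A B Cc D E) = D := by
  simp only [monSum, coeff_add, coeff_monomial]
  rw [if_neg (neY (by simp [Finsupp.single_apply])),
    if_neg (neY (by simp [Finsupp.single_apply])),
    if_neg (neY (by simp [Finsupp.single_apply])),
    if_neg (neY (by simp [Finsupp.single_apply]))]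
  simp
private lemma coeffE (A B Cc D E : R10) :
    MvPolynomial.coeff (Finsupp.single 1 4) (monSum A B Cc D E) = E := by
  simp only [monSum, coeff_add, coeff_monomial]
  rw [if_neg (neY (by simp [Finsupp.single_apply])),
    if_neg (neY (by simp [Finsupp.single_apply])),
    if_neg (neY (by simp [Finsupp.single_apply])),
    if_neg (neY (by simp [Finsupp.single_apply]))]
  simp

private noncomputable def QQ : R10 :=
  MM * ((qq1 * X 5 ^ 2 - qq2 * X 4 * X 5 + qq3 * X 4 ^ 2)
      * (qq1 * beta6 ^ 2 - qq2 * beta5 * beta6 + qq3 * beta5 ^ 2)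
      * (X 4 * beta6 - X 5 * beta5)) ^ 2

private theorem main_div :
    ∃ Q : MvPolynomial (Fin 10) ℤ,
      disc4
        (MvPolynomial.coeff (Finsupp.single 0 4)
          ((C beta1 * X 0 ^ 3 + C beta2 * X 0 ^ 2 * X 1 + C beta3 * X 0 * X 1 ^ 2
              + C beta4 * X 1 ^ 3) * (C beta5 * X 0 + C beta6 * X 1)))
        (MvPolynomial.coeff (Finsupp.single 0 3 + Finsupp.single 1 1)
          ((C beta1 * X 0 ^ 3 + C beta2 * X 0 ^ 2 * X 1 + C beta3 * X 0 * X 1 ^ 2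
              + C beta4 * X 1 ^ 3) * (C beta5 * X 0 + C beta6 * X 1)))
        (MvPolynomial.coeff (Finsupp.single 0 2 + Finsupp.single 1 2)
          ((C beta1 * X 0 ^ 3 + C beta2 * X 0 ^ 2 * X 1 + C beta3 * X 0 * X 1 ^ 2
              + C beta4 * X 1 ^ 3) * (C beta5 * X 0 + C beta6 * X 1)))
        (MvPolynomial.coeff (Finsupp.single 0 1 + Finsupp.single 1 3)
          ((C beta1 * X 0 ^ 3 + C beta2 * X 0 ^ 2 * X 1 + C beta3 * X 0 * X 1 ^ 2
              + C beta4 * X 1 ^ 3) * (C beta5 * X 0 + C beta6 * X 1)))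
        (MvPolynomial.coeff (Finsupp.single 1 4)
          ((C beta1 * X 0 ^ 3 + C beta2 * X 0 ^ 2 * X 1 + C beta3 * X 0 * X 1 ^ 2
              + C beta4 * X 1 ^ 3) * (C beta5 * X 0 + C beta6 * X 1)))
      = 16 * Q := by
  refine ⟨QQ, ?_⟩
  rw [prod_eq, coeffA, coeffB, coeffC, coeffD, coeffE]
  rw [hb1, hb2, hb3, hb4]
  have key := disc4_key (X 4 : R10) (X 5) qq1 qq2 qq3 beta5 beta6
  calc disc4 (X 4 * qq1 * beta5)
        (X 4 * qq1 * beta6 + (X 4 * qq2 + X 5 * qq1) * beta5)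
        ((X 4 * qq2 + X 5 * qq1) * beta6 + (X 4 * qq3 + X 5 * qq2) * beta5)
        ((X 4 * qq3 + X 5 * qq2) * beta6 + X 5 * qq3 * beta5)
        (X 5 * qq3 * beta6)
      = (qq2^2 - 4*qq1*qq3) * ((qq1 * X 5 ^2 - qq2 * X 4 * X 5 + qq3 * X 4 ^2)
          * (qq1*beta6^2 - qq2*beta5*beta6 + qq3*beta5^2)
          * (X 4 * beta6 - X 5 * beta5))^2 := key
    _ = 16 * QQ := by rw [hdisc2]; unfold QQ; ring

end Aux

open MvPolynomial in
/-
STATEMENT 10: with β₁,…,β₆ as above, F₁ = β₁X³+β₂X²Y+β₃XY²+β₄Y³ and F₂ = β₅X+β₆Y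
(binary forms over ℤ[a,b,d,e,g,h,j,k,o,r]), every coefficient of disc₄(F₁·F₂) is
divisible by 16; i.e. disc₄(F₁F₂) ∈ 16·ℤ[a,b,d,e,g,h,j,k,o,r].
Here F₁, F₂ live in MvPolynomial (Fin 2) (MvPolynomial (Fin 10) ℤ) with X = X 0, Y = X 1,
and the five coefficients of the quartic F₁·F₂ are extracted with MvPolynomial.coeff.
-/
theorem disc4_F1F2_divisible_by_16 :
    ∃ Q : MvPolynomial (Fin 10) ℤ,
      disc4
        (MvPolynomial.coeff (Finsupp.single 0 4)
          ((C beta1 * X 0 ^ 3 + C beta2 * X 0 ^ 2 * X 1 + C beta3 * X 0 * X 1 ^ 2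
              + C beta4 * X 1 ^ 3) * (C beta5 * X 0 + C beta6 * X 1)))
        (MvPolynomial.coeff (Finsupp.single 0 3 + Finsupp.single 1 1)
          ((C beta1 * X 0 ^ 3 + C beta2 * X 0 ^ 2 * X 1 + C beta3 * X 0 * X 1 ^ 2
              + C beta4 * X 1 ^ 3) * (C beta5 * X 0 + C beta6 * X 1)))
        (MvPolynomial.coeff (Finsupp.single 0 2 + Finsupp.single 1 2)
          ((C beta1 * X 0 ^ 3 + C beta2 * X 0 ^ 2 * X 1 + C beta3 * X 0 * X 1 ^ 2
              + C beta4 * X 1 ^ 3) * (C beta5 * X 0 + C beta6 * X 1)))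
        (MvPolynomial.coeff (Finsupp.single 0 1 + Finsupp.single 1 3)
          ((C beta1 * X 0 ^ 3 + C beta2 * X 0 ^ 2 * X 1 + C beta3 * X 0 * X 1 ^ 2
              + C beta4 * X 1 ^ 3) * (C beta5 * X 0 + C beta6 * X 1)))
        (MvPolynomial.coeff (Finsupp.single 1 4)
          ((C beta1 * X 0 ^ 3 + C beta2 * X 0 ^ 2 * X 1 + C beta3 * X 0 * X 1 ^ 2
              + C beta4 * X 1 ^ 3) * (C beta5 * X 0 + C beta6 * X 1)))
      = 16 * Q := by
  exact main_div
end

section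
/- The polynomial Δ₆ is invariant for the action of the group G₆ = SL₂(L)×SL₂(L)×Lˣ×Lˣ on V₆: for every γ ∈ G₆ and every v ∈ V₆, Δ₆(γ·v) = Δ₆(v). -/
/- Δ₆ = (1/16)·disc₄(F₁F₂): the integer polynomial Q with 16·Q = disc₄(F₁F₂)
(passed as the argument `Q`), interpreted in L via ℤ → L and evaluated at the
coordinates of v ∈ V₆. -/
noncomputable def Delta6 {L : Type*} [CommRing L]
    (Q : MvPolynomial (Fin 10) ℤ) (c : Fin 10 → L) : L :=
  MvPolynomial.aeval c Q

/- Zariski-closedness of a subset of affine n-space over L: it is the common zero locus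
of a set of polynomial functions (with respect to the fixed coordinates). -/
def IsZariskiClosed {n : ℕ} {L : Type*} [CommRing L] (s : Set (Fin n → L)) : Prop :=
  ∃ P : Set (MvPolynomial (Fin n) L), s = {x | ∀ p ∈ P, MvPolynomial.eval x p = 0}

/- Variables of the ambient polynomial ring of V₆: X, Y, Z are inl (inl 0), inl (inl 1),
inl (inr ()) and T, U, W are inr (inl 0), inr (inl 1), inr (inr ()). -/
abbrev Vars6 : Type := (Fin 2 ⊕ Unit) ⊕ (Fin 2 ⊕ Unit)

/- The element of V₆ with coordinates c = (a,b,d,e,g,h,j,k,o,r), recorded as the triple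
of its three components
((aX+bY)T² + (dX+eY)U² + (jX+kY)TU, (gX+hY)W², Z(oT+rU)W),
on which the torus part of G₆ acts by separate scalars. -/
noncomputable def toTriple6 {L : Type*} [CommRing L] (c : Fin 10 → L) :
    MvPolynomial Vars6 L × MvPolynomial Vars6 L × MvPolynomial Vars6 L :=
  ((MvPolynomial.C (c 0) * MvPolynomial.X (Sum.inl (Sum.inl 0)) + MvPolynomial.C (c 1) * MvPolynomial.X (Sum.inl (Sum.inl 1))) * MvPolynomial.X (Sum.inr (Sum.inl 0)) ^ 2
    + (MvPolynomial.C (c 2) * MvPolynomial.X (Sum.inl (Sum.inl 0)) + MvPolynomial.C (c 3) * MvPolynomial.X (Sum.inl (Sum.inl 1))) * MvPolynomial.X (Sum.inr (Sum.inl 1)) ^ 2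
    + (MvPolynomial.C (c 6) * MvPolynomial.X (Sum.inl (Sum.inl 0)) + MvPolynomial.C (c 7) * MvPolynomial.X (Sum.inl (Sum.inl 1))) * (MvPolynomial.X (Sum.inr (Sum.inl 0)) * MvPolynomial.X (Sum.inr (Sum.inl 1))),
   (MvPolynomial.C (c 4) * MvPolynomial.X (Sum.inl (Sum.inl 0)) + MvPolynomial.C (c 5) * MvPolynomial.X (Sum.inl (Sum.inl 1))) * MvPolynomial.X (Sum.inr (Sum.inr ())) ^ 2,
   MvPolynomial.X (Sum.inl (Sum.inr ())) * (MvPolynomial.C (c 8) * MvPolynomial.X (Sum.inr (Sum.inl 0)) + MvPolynomial.C (c 9) * MvPolynomial.X (Sum.inr (Sum.inl 1))) * MvPolynomial.X (Sum.inr (Sum.inr ())))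

/- Linear substitution in (X,Y) by M ∈ SL₂(L) fixing Z, and in (T,U) by N ∈ SL₂(L)
fixing W. -/
noncomputable def sub6 {L : Type*} [CommRing L]
    (M N : Matrix.SpecialLinearGroup (Fin 2) L)
    (v : MvPolynomial Vars6 L) : MvPolynomial Vars6 L :=
  MvPolynomial.aeval
    (Sum.elim
      (Sum.elim (fun i => ∑ j : Fin 2, MvPolynomial.C (M.1 i j) * MvPolynomial.X (Sum.inl (Sum.inl j)))
                (fun _ => MvPolynomial.X (Sum.inl (Sum.inr ()))))
      (Sum.elim (fun i => ∑ j : Fin 2, MvPolynomial.C (N.1 i j) * MvPolynomial.X (Sum.inr (Sum.inl j)))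
                (fun _ => MvPolynomial.X (Sum.inr (Sum.inr ()))))) v

/- The action of G₆ = SL₂(L) × SL₂(L) × Lˣ × Lˣ on V₆ (written on the triple of
components): (M, N, s, t) substitutes (X,Y) by M, (T,U) by N, and multiplies the first
component by s⁻¹, the second by s³t², and the third by t⁻¹. -/
noncomputable def act6 {L : Type*} [Field L]
    (g : Matrix.SpecialLinearGroup (Fin 2) L × Matrix.SpecialLinearGroup (Fin 2) L × Lˣ × Lˣ)
    (v : MvPolynomial Vars6 L × MvPolynomial Vars6 L × MvPolynomial Vars6 L) :
    MvPolynomial Vars6 L × MvPolynomial Vars6 L × MvPolynomial Vars6 L :=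
  (((g.2.2.1 : L))⁻¹ • sub6 g.1 g.2.1 v.1,
   ((g.2.2.1 : L) ^ 3 * (g.2.2.2 : L) ^ 2) • sub6 g.1 g.2.1 v.2.1,
   ((g.2.2.2 : L))⁻¹ • sub6 g.1 g.2.1 v.2.2)

/- Stability: the orbit of v (in the coordinate space of V₆ with respect to its monomial
basis) is Zariski-closed and the stabilizer of v in G₆ is finite. -/
def Stable6 {L : Type*} [Field L] (c : Fin 10 → L) : Prop :=
  IsZariskiClosed {c' : Fin 10 → L |
    ∃ g : Matrix.SpecialLinearGroup (Fin 2) L × Matrix.SpecialLinearGroup (Fin 2) L × Lˣ × Lˣ,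
      toTriple6 c' = act6 g (toTriple6 c)} ∧
  {g : Matrix.SpecialLinearGroup (Fin 2) L × Matrix.SpecialLinearGroup (Fin 2) L × Lˣ × Lˣ |
      act6 g (toTriple6 c) = toTriple6 c}.Finite


section Aux

open MvPolynomial

noncomputable def ivZ : Fin 10 → MvPolynomial (Fin 11) ℤ
| 0 => X 0
| 1 => X 1
| 2 => X 2
| 3 => X 3
| 4 => X 4
| 5 => X 5
| 6 => X 6
| 7 => X 7
| 8 => X 8
| 9 => X 9

noncomputable def pU : Fin 10 → MvPolynomial (Fin 11) ℤ
| 0 => X 0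
| 1 => X 10 * X 0 + X 1
| 2 => X 2
| 3 => X 10 * X 2 + X 3
| 4 => X 4
| 5 => X 10 * X 4 + X 5
| 6 => X 6
| 7 => X 10 * X 6 + X 7
| 8 => X 8
| 9 => X 9

noncomputable def pNU : Fin 10 → MvPolynomial (Fin 11) ℤ
| 0 => X 0
| 1 => X 1
| 2 => X 10 ^ 2 * X 0 + X 2 + X 10 * X 6
| 3 => X 10 ^ 2 * X 1 + X 3 + X 10 * X 7
| 4 => X 4
| 5 => X 5
| 6 => 2 * X 10 * X 0 + X 6
| 7 => 2 * X 10 * X 1 + X 7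
| 8 => X 8
| 9 => X 10 * X 8 + X 9

noncomputable def pNL : Fin 10 → MvPolynomial (Fin 11) ℤ
| 0 => X 0 + X 10 ^ 2 * X 2 + X 10 * X 6
| 1 => X 1 + X 10 ^ 2 * X 3 + X 10 * X 7
| 2 => X 2
| 3 => X 3
| 4 => X 4
| 5 => X 5
| 6 => 2 * X 10 * X 2 + X 6
| 7 => 2 * X 10 * X 3 + X 7
| 8 => X 8 + X 10 * X 9
| 9 => X 9

noncomputable def pSW : Fin 10 → MvPolynomial (Fin 11) ℤ
| 0 => X 1
| 1 => X 0
| 2 => X 3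
| 3 => X 2
| 4 => X 5
| 5 => X 4
| 6 => X 7
| 7 => X 6
| 8 => X 8
| 9 => X 9

noncomputable def pPS : Fin 10 → MvPolynomial (Fin 11) ℤ
| 0 => X 0
| 1 => X 1
| 2 => X 2
| 3 => X 3
| 4 => X 10 ^ 3 * X 4
| 5 => X 10 ^ 3 * X 5
| 6 => X 6
| 7 => X 7
| 8 => X 8
| 9 => X 9

noncomputable def pMS : Fin 10 → MvPolynomial (Fin 11) ℤ
| 0 => X 10 * X 0
| 1 => X 10 * X 1
| 2 => X 10 * X 2
| 3 => X 10 * X 3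
| 4 => X 4
| 5 => X 5
| 6 => X 10 * X 6
| 7 => X 10 * X 7
| 8 => X 8
| 9 => X 9

noncomputable def pPT : Fin 10 → MvPolynomial (Fin 11) ℤ
| 0 => X 0
| 1 => X 1
| 2 => X 2
| 3 => X 3
| 4 => X 10 ^ 2 * X 4
| 5 => X 10 ^ 2 * X 5
| 6 => X 6
| 7 => X 7
| 8 => X 8
| 9 => X 9

noncomputable def pMT : Fin 10 → MvPolynomial (Fin 11) ℤ
| 0 => X 0
| 1 => X 1
| 2 => X 2
| 3 => X 3
| 4 => X 4
| 5 => X 5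
| 6 => X 6
| 7 => X 7
| 8 => X 10 * X 8
| 9 => X 10 * X 9

lemma bpU1 : aeval pU beta1 = aeval ivZ beta1 := by
  simp only [beta1, beta2, beta3, beta4, beta5, beta6, map_sub, map_add, map_mul, map_neg, map_pow, map_ofNat, aeval_X, pU, ivZ]
  try ring

lemma bpU2 : aeval pU beta2 = aeval ivZ beta2 + 3 * X 10 * aeval ivZ beta1 := by
  simp only [beta1, beta2, beta3, beta4, beta5, beta6, map_sub, map_add, map_mul, map_neg, map_pow, map_ofNat, aeval_X, pU, ivZ]
  try ring

lemma bpU3 : aeval pU beta3 = aeval ivZ beta3 + 2 * X 10 * aeval ivZ beta2 + 3 * X 10 ^ 2 * aeval ivZ beta1 := by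
  simp only [beta1, beta2, beta3, beta4, beta5, beta6, map_sub, map_add, map_mul, map_neg, map_pow, map_ofNat, aeval_X, pU, ivZ]
  try ring

lemma bpU4 : aeval pU beta4 = aeval ivZ beta4 + X 10 * aeval ivZ beta3 + X 10 ^ 2 * aeval ivZ beta2 + X 10 ^ 3 * aeval ivZ beta1 := by
  simp only [beta1, beta2, beta3, beta4, beta5, beta6, map_sub, map_add, map_mul, map_neg, map_pow, map_ofNat, aeval_X, pU, ivZ]
  try ring

lemma bpU5 : aeval pU beta5 = aeval ivZ beta5 := by
  simp only [beta1, beta2, beta3, beta4, beta5, beta6, map_sub, map_add, map_mul, map_neg, map_pow, map_ofNat, aeval_X, pU, ivZ]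
  try ring

lemma bpU6 : aeval pU beta6 = aeval ivZ beta6 + X 10 * aeval ivZ beta5 := by
  simp only [beta1, beta2, beta3, beta4, beta5, beta6, map_sub, map_add, map_mul, map_neg, map_pow, map_ofNat, aeval_X, pU, ivZ]
  try ring

lemma bpNU1 : aeval pNU beta1 = aeval ivZ beta1 := by
  simp only [beta1, beta2, beta3, beta4, beta5, beta6, map_sub, map_add, map_mul, map_neg, map_pow, map_ofNat, aeval_X, pNU, ivZ]
  try ring

lemma bpNU2 : aeval pNU beta2 = aeval ivZ beta2 := by
  simp only [beta1, beta2, beta3, beta4, beta5, beta6, map_sub, map_add, map_mul, map_neg, map_pow, map_ofNat, aeval_X, pNU, ivZ]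
  try ring

lemma bpNU3 : aeval pNU beta3 = aeval ivZ beta3 := by
  simp only [beta1, beta2, beta3, beta4, beta5, beta6, map_sub, map_add, map_mul, map_neg, map_pow, map_ofNat, aeval_X, pNU, ivZ]
  try ring

lemma bpNU4 : aeval pNU beta4 = aeval ivZ beta4 := by
  simp only [beta1, beta2, beta3, beta4, beta5, beta6, map_sub, map_add, map_mul, map_neg, map_pow, map_ofNat, aeval_X, pNU, ivZ]
  try ring

lemma bpNU5 : aeval pNU beta5 = aeval ivZ beta5 := by
  simp only [beta1, beta2, beta3, beta4, beta5, beta6, map_sub, map_add, map_mul, map_neg, map_pow, map_ofNat, aeval_X, pNU, ivZ]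
  try ring

lemma bpNU6 : aeval pNU beta6 = aeval ivZ beta6 := by
  simp only [beta1, beta2, beta3, beta4, beta5, beta6, map_sub, map_add, map_mul, map_neg, map_pow, map_ofNat, aeval_X, pNU, ivZ]
  try ring

lemma bpNL1 : aeval pNL beta1 = aeval ivZ beta1 := by
  simp only [beta1, beta2, beta3, beta4, beta5, beta6, map_sub, map_add, map_mul, map_neg, map_pow, map_ofNat, aeval_X, pNL, ivZ]
  try ring

lemma bpNL2 : aeval pNL beta2 = aeval ivZ beta2 := by
  simp only [beta1, beta2, beta3, beta4, beta5, beta6, map_sub, map_add, map_mul, map_neg, map_pow, map_ofNat, aeval_X, pNL, ivZ]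
  try ring

lemma bpNL3 : aeval pNL beta3 = aeval ivZ beta3 := by
  simp only [beta1, beta2, beta3, beta4, beta5, beta6, map_sub, map_add, map_mul, map_neg, map_pow, map_ofNat, aeval_X, pNL, ivZ]
  try ring

lemma bpNL4 : aeval pNL beta4 = aeval ivZ beta4 := by
  simp only [beta1, beta2, beta3, beta4, beta5, beta6, map_sub, map_add, map_mul, map_neg, map_pow, map_ofNat, aeval_X, pNL, ivZ]
  try ring

lemma bpNL5 : aeval pNL beta5 = aeval ivZ beta5 := by
  simp only [beta1, beta2, beta3, beta4, beta5, beta6, map_sub, map_add, map_mul, map_neg, map_pow, map_ofNat, aeval_X, pNL, ivZ]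
  try ring

lemma bpNL6 : aeval pNL beta6 = aeval ivZ beta6 := by
  simp only [beta1, beta2, beta3, beta4, beta5, beta6, map_sub, map_add, map_mul, map_neg, map_pow, map_ofNat, aeval_X, pNL, ivZ]
  try ring

lemma bpSW1 : aeval pSW beta1 = aeval ivZ beta4 := by
  simp only [beta1, beta2, beta3, beta4, beta5, beta6, map_sub, map_add, map_mul, map_neg, map_pow, map_ofNat, aeval_X, pSW, ivZ]
  try ring

lemma bpSW2 : aeval pSW beta2 = aeval ivZ beta3 := by
  simp only [beta1, beta2, beta3, beta4, beta5, beta6, map_sub, map_add, map_mul, map_neg, map_pow, map_ofNat, aeval_X, pSW, ivZ]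
  try ring

lemma bpSW3 : aeval pSW beta3 = aeval ivZ beta2 := by
  simp only [beta1, beta2, beta3, beta4, beta5, beta6, map_sub, map_add, map_mul, map_neg, map_pow, map_ofNat, aeval_X, pSW, ivZ]
  try ring

lemma bpSW4 : aeval pSW beta4 = aeval ivZ beta1 := by
  simp only [beta1, beta2, beta3, beta4, beta5, beta6, map_sub, map_add, map_mul, map_neg, map_pow, map_ofNat, aeval_X, pSW, ivZ]
  try ring

lemma bpSW5 : aeval pSW beta5 = aeval ivZ beta6 := by
  simp only [beta1, beta2, beta3, beta4, beta5, beta6, map_sub, map_add, map_mul, map_neg, map_pow, map_ofNat, aeval_X, pSW, ivZ]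
  try ring

lemma bpSW6 : aeval pSW beta6 = aeval ivZ beta5 := by
  simp only [beta1, beta2, beta3, beta4, beta5, beta6, map_sub, map_add, map_mul, map_neg, map_pow, map_ofNat, aeval_X, pSW, ivZ]
  try ring

lemma bpPS1 : aeval pPS beta1 = X 10 ^ 3 * aeval ivZ beta1 := by
  simp only [beta1, beta2, beta3, beta4, beta5, beta6, map_sub, map_add, map_mul, map_neg, map_pow, map_ofNat, aeval_X, pPS, ivZ]
  try ring

lemma bpPS2 : aeval pPS beta2 = X 10 ^ 3 * aeval ivZ beta2 := by
  simp only [beta1, beta2, beta3, beta4, beta5, beta6, map_sub, map_add, map_mul, map_neg, map_pow, map_ofNat, aeval_X, pPS, ivZ]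
  try ring

lemma bpPS3 : aeval pPS beta3 = X 10 ^ 3 * aeval ivZ beta3 := by
  simp only [beta1, beta2, beta3, beta4, beta5, beta6, map_sub, map_add, map_mul, map_neg, map_pow, map_ofNat, aeval_X, pPS, ivZ]
  try ring

lemma bpPS4 : aeval pPS beta4 = X 10 ^ 3 * aeval ivZ beta4 := by
  simp only [beta1, beta2, beta3, beta4, beta5, beta6, map_sub, map_add, map_mul, map_neg, map_pow, map_ofNat, aeval_X, pPS, ivZ]
  try ring

lemma bpPS5 : aeval pPS beta5 = aeval ivZ beta5 := by
  simp only [beta1, beta2, beta3, beta4, beta5, beta6, map_sub, map_add, map_mul, map_neg, map_pow, map_ofNat, aeval_X, pPS, ivZ]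
  try ring

lemma bpPS6 : aeval pPS beta6 = aeval ivZ beta6 := by
  simp only [beta1, beta2, beta3, beta4, beta5, beta6, map_sub, map_add, map_mul, map_neg, map_pow, map_ofNat, aeval_X, pPS, ivZ]
  try ring

lemma bpMS1 : aeval pMS beta1 = X 10 ^ 2 * aeval ivZ beta1 := by
  simp only [beta1, beta2, beta3, beta4, beta5, beta6, map_sub, map_add, map_mul, map_neg, map_pow, map_ofNat, aeval_X, pMS, ivZ]
  try ring

lemma bpMS2 : aeval pMS beta2 = X 10 ^ 2 * aeval ivZ beta2 := by
  simp only [beta1, beta2, beta3, beta4, beta5, beta6, map_sub, map_add, map_mul, map_neg, map_pow, map_ofNat, aeval_X, pMS, ivZ]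
  try ring

lemma bpMS3 : aeval pMS beta3 = X 10 ^ 2 * aeval ivZ beta3 := by
  simp only [beta1, beta2, beta3, beta4, beta5, beta6, map_sub, map_add, map_mul, map_neg, map_pow, map_ofNat, aeval_X, pMS, ivZ]
  try ring

lemma bpMS4 : aeval pMS beta4 = X 10 ^ 2 * aeval ivZ beta4 := by
  simp only [beta1, beta2, beta3, beta4, beta5, beta6, map_sub, map_add, map_mul, map_neg, map_pow, map_ofNat, aeval_X, pMS, ivZ]
  try ring

lemma bpMS5 : aeval pMS beta5 = X 10 * aeval ivZ beta5 := by
  simp only [beta1, beta2, beta3, beta4, beta5, beta6, map_sub, map_add, map_mul, map_neg, map_pow, map_ofNat, aeval_X, pMS, ivZ]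
  try ring

lemma bpMS6 : aeval pMS beta6 = X 10 * aeval ivZ beta6 := by
  simp only [beta1, beta2, beta3, beta4, beta5, beta6, map_sub, map_add, map_mul, map_neg, map_pow, map_ofNat, aeval_X, pMS, ivZ]
  try ring

lemma bpPT1 : aeval pPT beta1 = X 10 ^ 2 * aeval ivZ beta1 := by
  simp only [beta1, beta2, beta3, beta4, beta5, beta6, map_sub, map_add, map_mul, map_neg, map_pow, map_ofNat, aeval_X, pPT, ivZ]
  try ring

lemma bpPT2 : aeval pPT beta2 = X 10 ^ 2 * aeval ivZ beta2 := by
  simp only [beta1, beta2, beta3, beta4, beta5, beta6, map_sub, map_add, map_mul, map_neg, map_pow, map_ofNat, aeval_X, pPT, ivZ]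
  try ring

lemma bpPT3 : aeval pPT beta3 = X 10 ^ 2 * aeval ivZ beta3 := by
  simp only [beta1, beta2, beta3, beta4, beta5, beta6, map_sub, map_add, map_mul, map_neg, map_pow, map_ofNat, aeval_X, pPT, ivZ]
  try ring

lemma bpPT4 : aeval pPT beta4 = X 10 ^ 2 * aeval ivZ beta4 := by
  simp only [beta1, beta2, beta3, beta4, beta5, beta6, map_sub, map_add, map_mul, map_neg, map_pow, map_ofNat, aeval_X, pPT, ivZ]
  try ring

lemma bpPT5 : aeval pPT beta5 = aeval ivZ beta5 := by
  simp only [beta1, beta2, beta3, beta4, beta5, beta6, map_sub, map_add, map_mul, map_neg, map_pow, map_ofNat, aeval_X, pPT, ivZ]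
  try ring

lemma bpPT6 : aeval pPT beta6 = aeval ivZ beta6 := by
  simp only [beta1, beta2, beta3, beta4, beta5, beta6, map_sub, map_add, map_mul, map_neg, map_pow, map_ofNat, aeval_X, pPT, ivZ]
  try ring

lemma bpMT1 : aeval pMT beta1 = aeval ivZ beta1 := by
  simp only [beta1, beta2, beta3, beta4, beta5, beta6, map_sub, map_add, map_mul, map_neg, map_pow, map_ofNat, aeval_X, pMT, ivZ]
  try ring

lemma bpMT2 : aeval pMT beta2 = aeval ivZ beta2 := by
  simp only [beta1, beta2, beta3, beta4, beta5, beta6, map_sub, map_add, map_mul, map_neg, map_pow, map_ofNat, aeval_X, pMT, ivZ]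
  try ring

lemma bpMT3 : aeval pMT beta3 = aeval ivZ beta3 := by
  simp only [beta1, beta2, beta3, beta4, beta5, beta6, map_sub, map_add, map_mul, map_neg, map_pow, map_ofNat, aeval_X, pMT, ivZ]
  try ring

lemma bpMT4 : aeval pMT beta4 = aeval ivZ beta4 := by
  simp only [beta1, beta2, beta3, beta4, beta5, beta6, map_sub, map_add, map_mul, map_neg, map_pow, map_ofNat, aeval_X, pMT, ivZ]
  try ring

lemma bpMT5 : aeval pMT beta5 = X 10 ^ 2 * aeval ivZ beta5 := by
  simp only [beta1, beta2, beta3, beta4, beta5, beta6, map_sub, map_add, map_mul, map_neg, map_pow, map_ofNat, aeval_X, pMT, ivZ]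
  try ring

lemma bpMT6 : aeval pMT beta6 = X 10 ^ 2 * aeval ivZ beta6 := by
  simp only [beta1, beta2, beta3, beta4, beta5, beta6, map_sub, map_add, map_mul, map_neg, map_pow, map_ofNat, aeval_X, pMT, ivZ]
  try ring


lemma map_disc4 {R S F : Type*} [CommRing R] [CommRing S] [FunLike F R S] [RingHomClass F R S] (f : F) (A B C D E : R) :
    f (disc4 A B C D E) = disc4 (f A) (f B) (f C) (f D) (f E) := by
  simp only [disc4, map_add, map_sub, map_mul, map_pow, map_ofNat]

lemma disc4_shear {R : Type*} [CommRing R] (A B C D E x : R) :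
    disc4 A (B + 4 * A * x) (C + 3 * B * x + 6 * A * x ^ 2)
      (D + 2 * C * x + 3 * B * x ^ 2 + 4 * A * x ^ 3)
      (E + D * x + C * x ^ 2 + B * x ^ 3 + A * x ^ 4) = disc4 A B C D E := by
  unfold disc4; ring

lemma disc4_rev {R : Type*} [CommRing R] (A B C D E : R) :
    disc4 E D C B A = disc4 A B C D E := by unfold disc4; ring

lemma disc4_scale {R : Type*} [CommRing R] (l A B C D E : R) :
    disc4 (l * A) (l * B) (l * C) (l * D) (l * E) = l ^ 6 * disc4 A B C D E := by
  unfold disc4; ring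


lemma spUA : aeval pU (beta1 * beta5) = aeval ivZ (beta1 * beta5) := by
  simp only [map_add, map_mul, bpU1, bpU2, bpU3, bpU4, bpU5, bpU6]
  try ring

lemma spUB : aeval pU (beta1 * beta6 + beta2 * beta5) = aeval ivZ (beta1 * beta6 + beta2 * beta5) + 4 * aeval ivZ (beta1 * beta5) * X 10 := by
  simp only [map_add, map_mul, bpU1, bpU2, bpU3, bpU4, bpU5, bpU6]
  try ring

lemma spUC : aeval pU (beta2 * beta6 + beta3 * beta5) = aeval ivZ (beta2 * beta6 + beta3 * beta5) + 3 * aeval ivZ (beta1 * beta6 + beta2 * beta5) * X 10 + 6 * aeval ivZ (beta1 * beta5) * X 10 ^ 2 := by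
  simp only [map_add, map_mul, bpU1, bpU2, bpU3, bpU4, bpU5, bpU6]
  try ring

lemma spUD : aeval pU (beta3 * beta6 + beta4 * beta5) = aeval ivZ (beta3 * beta6 + beta4 * beta5) + 2 * aeval ivZ (beta2 * beta6 + beta3 * beta5) * X 10 + 3 * aeval ivZ (beta1 * beta6 + beta2 * beta5) * X 10 ^ 2 + 4 * aeval ivZ (beta1 * beta5) * X 10 ^ 3 := by
  simp only [map_add, map_mul, bpU1, bpU2, bpU3, bpU4, bpU5, bpU6]
  try ring

lemma spUE : aeval pU (beta4 * beta6) = aeval ivZ (beta4 * beta6) + aeval ivZ (beta3 * beta6 + beta4 * beta5) * X 10 + aeval ivZ (beta2 * beta6 + beta3 * beta5) * X 10 ^ 2 + aeval ivZ (beta1 * beta6 + beta2 * beta5) * X 10 ^ 3 + aeval ivZ (beta1 * beta5) * X 10 ^ 4 := by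
  simp only [map_add, map_mul, bpU1, bpU2, bpU3, bpU4, bpU5, bpU6]
  try ring

lemma spNUA : aeval pNU (beta1 * beta5) = aeval ivZ (beta1 * beta5) := by
  simp only [map_add, map_mul, bpNU1, bpNU2, bpNU3, bpNU4, bpNU5, bpNU6]
  try ring

lemma spNUB : aeval pNU (beta1 * beta6 + beta2 * beta5) = aeval ivZ (beta1 * beta6 + beta2 * beta5) := by
  simp only [map_add, map_mul, bpNU1, bpNU2, bpNU3, bpNU4, bpNU5, bpNU6]
  try ring

lemma spNUC : aeval pNU (beta2 * beta6 + beta3 * beta5) = aeval ivZ (beta2 * beta6 + beta3 * beta5) := by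
  simp only [map_add, map_mul, bpNU1, bpNU2, bpNU3, bpNU4, bpNU5, bpNU6]
  try ring

lemma spNUD : aeval pNU (beta3 * beta6 + beta4 * beta5) = aeval ivZ (beta3 * beta6 + beta4 * beta5) := by
  simp only [map_add, map_mul, bpNU1, bpNU2, bpNU3, bpNU4, bpNU5, bpNU6]
  try ring

lemma spNUE : aeval pNU (beta4 * beta6) = aeval ivZ (beta4 * beta6) := by
  simp only [map_add, map_mul, bpNU1, bpNU2, bpNU3, bpNU4, bpNU5, bpNU6]
  try ring

lemma spNLA : aeval pNL (beta1 * beta5) = aeval ivZ (beta1 * beta5) := by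
  simp only [map_add, map_mul, bpNL1, bpNL2, bpNL3, bpNL4, bpNL5, bpNL6]
  try ring

lemma spNLB : aeval pNL (beta1 * beta6 + beta2 * beta5) = aeval ivZ (beta1 * beta6 + beta2 * beta5) := by
  simp only [map_add, map_mul, bpNL1, bpNL2, bpNL3, bpNL4, bpNL5, bpNL6]
  try ring

lemma spNLC : aeval pNL (beta2 * beta6 + beta3 * beta5) = aeval ivZ (beta2 * beta6 + beta3 * beta5) := by
  simp only [map_add, map_mul, bpNL1, bpNL2, bpNL3, bpNL4, bpNL5, bpNL6]
  try ring

lemma spNLD : aeval pNL (beta3 * beta6 + beta4 * beta5) = aeval ivZ (beta3 * beta6 + beta4 * beta5) := by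
  simp only [map_add, map_mul, bpNL1, bpNL2, bpNL3, bpNL4, bpNL5, bpNL6]
  try ring

lemma spNLE : aeval pNL (beta4 * beta6) = aeval ivZ (beta4 * beta6) := by
  simp only [map_add, map_mul, bpNL1, bpNL2, bpNL3, bpNL4, bpNL5, bpNL6]
  try ring

lemma spSWA : aeval pSW (beta1 * beta5) = aeval ivZ (beta4 * beta6) := by
  simp only [map_add, map_mul, bpSW1, bpSW2, bpSW3, bpSW4, bpSW5, bpSW6]
  try ring

lemma spSWB : aeval pSW (beta1 * beta6 + beta2 * beta5) = aeval ivZ (beta3 * beta6 + beta4 * beta5) := by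
  simp only [map_add, map_mul, bpSW1, bpSW2, bpSW3, bpSW4, bpSW5, bpSW6]
  try ring

lemma spSWC : aeval pSW (beta2 * beta6 + beta3 * beta5) = aeval ivZ (beta2 * beta6 + beta3 * beta5) := by
  simp only [map_add, map_mul, bpSW1, bpSW2, bpSW3, bpSW4, bpSW5, bpSW6]
  try ring

lemma spSWD : aeval pSW (beta3 * beta6 + beta4 * beta5) = aeval ivZ (beta1 * beta6 + beta2 * beta5) := by
  simp only [map_add, map_mul, bpSW1, bpSW2, bpSW3, bpSW4, bpSW5, bpSW6]
  try ring

lemma spSWE : aeval pSW (beta4 * beta6) = aeval ivZ (beta1 * beta5) := by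
  simp only [map_add, map_mul, bpSW1, bpSW2, bpSW3, bpSW4, bpSW5, bpSW6]
  try ring

lemma spPSA : aeval pPS (beta1 * beta5) = X 10 ^ 3 * aeval ivZ (beta1 * beta5) := by
  simp only [map_add, map_mul, bpPS1, bpPS2, bpPS3, bpPS4, bpPS5, bpPS6]
  try ring

lemma spPSB : aeval pPS (beta1 * beta6 + beta2 * beta5) = X 10 ^ 3 * aeval ivZ (beta1 * beta6 + beta2 * beta5) := by
  simp only [map_add, map_mul, bpPS1, bpPS2, bpPS3, bpPS4, bpPS5, bpPS6]
  try ring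

lemma spPSC : aeval pPS (beta2 * beta6 + beta3 * beta5) = X 10 ^ 3 * aeval ivZ (beta2 * beta6 + beta3 * beta5) := by
  simp only [map_add, map_mul, bpPS1, bpPS2, bpPS3, bpPS4, bpPS5, bpPS6]
  try ring

lemma spPSD : aeval pPS (beta3 * beta6 + beta4 * beta5) = X 10 ^ 3 * aeval ivZ (beta3 * beta6 + beta4 * beta5) := by
  simp only [map_add, map_mul, bpPS1, bpPS2, bpPS3, bpPS4, bpPS5, bpPS6]
  try ring

lemma spPSE : aeval pPS (beta4 * beta6) = X 10 ^ 3 * aeval ivZ (beta4 * beta6) := by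
  simp only [map_add, map_mul, bpPS1, bpPS2, bpPS3, bpPS4, bpPS5, bpPS6]
  try ring

lemma spMSA : aeval pMS (beta1 * beta5) = X 10 ^ 3 * aeval ivZ (beta1 * beta5) := by
  simp only [map_add, map_mul, bpMS1, bpMS2, bpMS3, bpMS4, bpMS5, bpMS6]
  try ring

lemma spMSB : aeval pMS (beta1 * beta6 + beta2 * beta5) = X 10 ^ 3 * aeval ivZ (beta1 * beta6 + beta2 * beta5) := by
  simp only [map_add, map_mul, bpMS1, bpMS2, bpMS3, bpMS4, bpMS5, bpMS6]
  try ring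

lemma spMSC : aeval pMS (beta2 * beta6 + beta3 * beta5) = X 10 ^ 3 * aeval ivZ (beta2 * beta6 + beta3 * beta5) := by
  simp only [map_add, map_mul, bpMS1, bpMS2, bpMS3, bpMS4, bpMS5, bpMS6]
  try ring

lemma spMSD : aeval pMS (beta3 * beta6 + beta4 * beta5) = X 10 ^ 3 * aeval ivZ (beta3 * beta6 + beta4 * beta5) := by
  simp only [map_add, map_mul, bpMS1, bpMS2, bpMS3, bpMS4, bpMS5, bpMS6]
  try ring

lemma spMSE : aeval pMS (beta4 * beta6) = X 10 ^ 3 * aeval ivZ (beta4 * beta6) := by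
  simp only [map_add, map_mul, bpMS1, bpMS2, bpMS3, bpMS4, bpMS5, bpMS6]
  try ring

lemma spPTA : aeval pPT (beta1 * beta5) = X 10 ^ 2 * aeval ivZ (beta1 * beta5) := by
  simp only [map_add, map_mul, bpPT1, bpPT2, bpPT3, bpPT4, bpPT5, bpPT6]
  try ring

lemma spPTB : aeval pPT (beta1 * beta6 + beta2 * beta5) = X 10 ^ 2 * aeval ivZ (beta1 * beta6 + beta2 * beta5) := by
  simp only [map_add, map_mul, bpPT1, bpPT2, bpPT3, bpPT4, bpPT5, bpPT6]
  try ring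

lemma spPTC : aeval pPT (beta2 * beta6 + beta3 * beta5) = X 10 ^ 2 * aeval ivZ (beta2 * beta6 + beta3 * beta5) := by
  simp only [map_add, map_mul, bpPT1, bpPT2, bpPT3, bpPT4, bpPT5, bpPT6]
  try ring

lemma spPTD : aeval pPT (beta3 * beta6 + beta4 * beta5) = X 10 ^ 2 * aeval ivZ (beta3 * beta6 + beta4 * beta5) := by
  simp only [map_add, map_mul, bpPT1, bpPT2, bpPT3, bpPT4, bpPT5, bpPT6]
  try ring

lemma spPTE : aeval pPT (beta4 * beta6) = X 10 ^ 2 * aeval ivZ (beta4 * beta6) := by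
  simp only [map_add, map_mul, bpPT1, bpPT2, bpPT3, bpPT4, bpPT5, bpPT6]
  try ring

lemma spMTA : aeval pMT (beta1 * beta5) = X 10 ^ 2 * aeval ivZ (beta1 * beta5) := by
  simp only [map_add, map_mul, bpMT1, bpMT2, bpMT3, bpMT4, bpMT5, bpMT6]
  try ring

lemma spMTB : aeval pMT (beta1 * beta6 + beta2 * beta5) = X 10 ^ 2 * aeval ivZ (beta1 * beta6 + beta2 * beta5) := by
  simp only [map_add, map_mul, bpMT1, bpMT2, bpMT3, bpMT4, bpMT5, bpMT6]
  try ring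

lemma spMTC : aeval pMT (beta2 * beta6 + beta3 * beta5) = X 10 ^ 2 * aeval ivZ (beta2 * beta6 + beta3 * beta5) := by
  simp only [map_add, map_mul, bpMT1, bpMT2, bpMT3, bpMT4, bpMT5, bpMT6]
  try ring

lemma spMTD : aeval pMT (beta3 * beta6 + beta4 * beta5) = X 10 ^ 2 * aeval ivZ (beta3 * beta6 + beta4 * beta5) := by
  simp only [map_add, map_mul, bpMT1, bpMT2, bpMT3, bpMT4, bpMT5, bpMT6]
  try ring

lemma spMTE : aeval pMT (beta4 * beta6) = X 10 ^ 2 * aeval ivZ (beta4 * beta6) := by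
  simp only [map_add, map_mul, bpMT1, bpMT2, bpMT3, bpMT4, bpMT5, bpMT6]
  try ring

lemma DpU : aeval pU (disc4 (beta1 * beta5) (beta1 * beta6 + beta2 * beta5) (beta2 * beta6 + beta3 * beta5) (beta3 * beta6 + beta4 * beta5) (beta4 * beta6)) = aeval ivZ (disc4 (beta1 * beta5) (beta1 * beta6 + beta2 * beta5) (beta2 * beta6 + beta3 * beta5) (beta3 * beta6 + beta4 * beta5) (beta4 * beta6)) := by
  rw [map_disc4 (aeval pU : MvPolynomial (Fin 10) ℤ →ₐ[ℤ] MvPolynomial (Fin 11) ℤ), spUA, spUB, spUC, spUD, spUE, disc4_shear, ← map_disc4 (aeval ivZ : MvPolynomial (Fin 10) ℤ →ₐ[ℤ] MvPolynomial (Fin 11) ℤ)]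

lemma DpNU : aeval pNU (disc4 (beta1 * beta5) (beta1 * beta6 + beta2 * beta5) (beta2 * beta6 + beta3 * beta5) (beta3 * beta6 + beta4 * beta5) (beta4 * beta6)) = aeval ivZ (disc4 (beta1 * beta5) (beta1 * beta6 + beta2 * beta5) (beta2 * beta6 + beta3 * beta5) (beta3 * beta6 + beta4 * beta5) (beta4 * beta6)) := by
  rw [map_disc4 (aeval pNU : MvPolynomial (Fin 10) ℤ →ₐ[ℤ] MvPolynomial (Fin 11) ℤ), spNUA, spNUB, spNUC, spNUD, spNUE, ← map_disc4 (aeval ivZ : MvPolynomial (Fin 10) ℤ →ₐ[ℤ] MvPolynomial (Fin 11) ℤ)]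

lemma DpNL : aeval pNL (disc4 (beta1 * beta5) (beta1 * beta6 + beta2 * beta5) (beta2 * beta6 + beta3 * beta5) (beta3 * beta6 + beta4 * beta5) (beta4 * beta6)) = aeval ivZ (disc4 (beta1 * beta5) (beta1 * beta6 + beta2 * beta5) (beta2 * beta6 + beta3 * beta5) (beta3 * beta6 + beta4 * beta5) (beta4 * beta6)) := by
  rw [map_disc4 (aeval pNL : MvPolynomial (Fin 10) ℤ →ₐ[ℤ] MvPolynomial (Fin 11) ℤ), spNLA, spNLB, spNLC, spNLD, spNLE, ← map_disc4 (aeval ivZ : MvPolynomial (Fin 10) ℤ →ₐ[ℤ] MvPolynomial (Fin 11) ℤ)]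

lemma DpSW : aeval pSW (disc4 (beta1 * beta5) (beta1 * beta6 + beta2 * beta5) (beta2 * beta6 + beta3 * beta5) (beta3 * beta6 + beta4 * beta5) (beta4 * beta6)) = aeval ivZ (disc4 (beta1 * beta5) (beta1 * beta6 + beta2 * beta5) (beta2 * beta6 + beta3 * beta5) (beta3 * beta6 + beta4 * beta5) (beta4 * beta6)) := by
  rw [map_disc4 (aeval pSW : MvPolynomial (Fin 10) ℤ →ₐ[ℤ] MvPolynomial (Fin 11) ℤ), spSWA, spSWB, spSWC, spSWD, spSWE, disc4_rev, ← map_disc4 (aeval ivZ : MvPolynomial (Fin 10) ℤ →ₐ[ℤ] MvPolynomial (Fin 11) ℤ)]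

lemma DpPS : aeval pPS (disc4 (beta1 * beta5) (beta1 * beta6 + beta2 * beta5) (beta2 * beta6 + beta3 * beta5) (beta3 * beta6 + beta4 * beta5) (beta4 * beta6)) = X 10 ^ 18 * aeval ivZ (disc4 (beta1 * beta5) (beta1 * beta6 + beta2 * beta5) (beta2 * beta6 + beta3 * beta5) (beta3 * beta6 + beta4 * beta5) (beta4 * beta6)) := by
  rw [map_disc4 (aeval pPS : MvPolynomial (Fin 10) ℤ →ₐ[ℤ] MvPolynomial (Fin 11) ℤ), spPSA, spPSB, spPSC, spPSD, spPSE, disc4_scale, ← map_disc4 (aeval ivZ : MvPolynomial (Fin 10) ℤ →ₐ[ℤ] MvPolynomial (Fin 11) ℤ)]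
  ring

lemma DpMS : aeval pMS (disc4 (beta1 * beta5) (beta1 * beta6 + beta2 * beta5) (beta2 * beta6 + beta3 * beta5) (beta3 * beta6 + beta4 * beta5) (beta4 * beta6)) = X 10 ^ 18 * aeval ivZ (disc4 (beta1 * beta5) (beta1 * beta6 + beta2 * beta5) (beta2 * beta6 + beta3 * beta5) (beta3 * beta6 + beta4 * beta5) (beta4 * beta6)) := by
  rw [map_disc4 (aeval pMS : MvPolynomial (Fin 10) ℤ →ₐ[ℤ] MvPolynomial (Fin 11) ℤ), spMSA, spMSB, spMSC, spMSD, spMSE, disc4_scale, ← map_disc4 (aeval ivZ : MvPolynomial (Fin 10) ℤ →ₐ[ℤ] MvPolynomial (Fin 11) ℤ)]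
  ring

lemma DpPT : aeval pPT (disc4 (beta1 * beta5) (beta1 * beta6 + beta2 * beta5) (beta2 * beta6 + beta3 * beta5) (beta3 * beta6 + beta4 * beta5) (beta4 * beta6)) = X 10 ^ 12 * aeval ivZ (disc4 (beta1 * beta5) (beta1 * beta6 + beta2 * beta5) (beta2 * beta6 + beta3 * beta5) (beta3 * beta6 + beta4 * beta5) (beta4 * beta6)) := by
  rw [map_disc4 (aeval pPT : MvPolynomial (Fin 10) ℤ →ₐ[ℤ] MvPolynomial (Fin 11) ℤ), spPTA, spPTB, spPTC, spPTD, spPTE, disc4_scale, ← map_disc4 (aeval ivZ : MvPolynomial (Fin 10) ℤ →ₐ[ℤ] MvPolynomial (Fin 11) ℤ)]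
  ring

lemma DpMT : aeval pMT (disc4 (beta1 * beta5) (beta1 * beta6 + beta2 * beta5) (beta2 * beta6 + beta3 * beta5) (beta3 * beta6 + beta4 * beta5) (beta4 * beta6)) = X 10 ^ 12 * aeval ivZ (disc4 (beta1 * beta5) (beta1 * beta6 + beta2 * beta5) (beta2 * beta6 + beta3 * beta5) (beta3 * beta6 + beta4 * beta5) (beta4 * beta6)) := by
  rw [map_disc4 (aeval pMT : MvPolynomial (Fin 10) ℤ →ₐ[ℤ] MvPolynomial (Fin 11) ℤ), spMTA, spMTB, spMTC, spMTD, spMTE, disc4_scale, ← map_disc4 (aeval ivZ : MvPolynomial (Fin 10) ℤ →ₐ[ℤ] MvPolynomial (Fin 11) ℤ)]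
  ring


lemma sixteen_ne : (16 : MvPolynomial (Fin 11) ℤ) ≠ 0 := by
  intro h
  have h2 := congrArg constantCoeff h
  simp only [map_ofNat, map_zero] at h2
  norm_num at h2


lemma QpU (Q : MvPolynomial (Fin 10) ℤ)
    (hQ : 16 * Q = disc4 (beta1 * beta5) (beta1 * beta6 + beta2 * beta5) (beta2 * beta6 + beta3 * beta5) (beta3 * beta6 + beta4 * beta5) (beta4 * beta6)) :
    aeval pU Q = aeval ivZ Q := by
  have h16 : aeval pU (16 * Q) = aeval ivZ (16 * Q) := by
    rw [hQ]; exact DpU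
  have h16' : 16 * aeval pU Q = 16 * aeval ivZ Q := by
    have := h16
    simp only [map_mul, map_ofNat] at this
    linear_combination this
  exact mul_left_cancel₀ sixteen_ne h16'

lemma QpNU (Q : MvPolynomial (Fin 10) ℤ)
    (hQ : 16 * Q = disc4 (beta1 * beta5) (beta1 * beta6 + beta2 * beta5) (beta2 * beta6 + beta3 * beta5) (beta3 * beta6 + beta4 * beta5) (beta4 * beta6)) :
    aeval pNU Q = aeval ivZ Q := by
  have h16 : aeval pNU (16 * Q) = aeval ivZ (16 * Q) := by
    rw [hQ]; exact DpNU
  have h16' : 16 * aeval pNU Q = 16 * aeval ivZ Q := by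
    have := h16
    simp only [map_mul, map_ofNat] at this
    linear_combination this
  exact mul_left_cancel₀ sixteen_ne h16'

lemma QpNL (Q : MvPolynomial (Fin 10) ℤ)
    (hQ : 16 * Q = disc4 (beta1 * beta5) (beta1 * beta6 + beta2 * beta5) (beta2 * beta6 + beta3 * beta5) (beta3 * beta6 + beta4 * beta5) (beta4 * beta6)) :
    aeval pNL Q = aeval ivZ Q := by
  have h16 : aeval pNL (16 * Q) = aeval ivZ (16 * Q) := by
    rw [hQ]; exact DpNL
  have h16' : 16 * aeval pNL Q = 16 * aeval ivZ Q := by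
    have := h16
    simp only [map_mul, map_ofNat] at this
    linear_combination this
  exact mul_left_cancel₀ sixteen_ne h16'

lemma QpSW (Q : MvPolynomial (Fin 10) ℤ)
    (hQ : 16 * Q = disc4 (beta1 * beta5) (beta1 * beta6 + beta2 * beta5) (beta2 * beta6 + beta3 * beta5) (beta3 * beta6 + beta4 * beta5) (beta4 * beta6)) :
    aeval pSW Q = aeval ivZ Q := by
  have h16 : aeval pSW (16 * Q) = aeval ivZ (16 * Q) := by
    rw [hQ]; exact DpSW
  have h16' : 16 * aeval pSW Q = 16 * aeval ivZ Q := by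
    have := h16
    simp only [map_mul, map_ofNat] at this
    linear_combination this
  exact mul_left_cancel₀ sixteen_ne h16'

lemma QpPS (Q : MvPolynomial (Fin 10) ℤ)
    (hQ : 16 * Q = disc4 (beta1 * beta5) (beta1 * beta6 + beta2 * beta5) (beta2 * beta6 + beta3 * beta5) (beta3 * beta6 + beta4 * beta5) (beta4 * beta6)) :
    aeval pPS Q = X 10 ^ 18 * aeval ivZ Q := by
  have h16 : aeval pPS (16 * Q) = X 10 ^ 18 * aeval ivZ (16 * Q) := by
    rw [hQ]; exact DpPS
  have h16' : 16 * aeval pPS Q = 16 * (X 10 ^ 18 * aeval ivZ Q) := by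
    have := h16
    simp only [map_mul, map_ofNat] at this
    linear_combination this
  exact mul_left_cancel₀ sixteen_ne h16'

lemma QpMS (Q : MvPolynomial (Fin 10) ℤ)
    (hQ : 16 * Q = disc4 (beta1 * beta5) (beta1 * beta6 + beta2 * beta5) (beta2 * beta6 + beta3 * beta5) (beta3 * beta6 + beta4 * beta5) (beta4 * beta6)) :
    aeval pMS Q = X 10 ^ 18 * aeval ivZ Q := by
  have h16 : aeval pMS (16 * Q) = X 10 ^ 18 * aeval ivZ (16 * Q) := by
    rw [hQ]; exact DpMS
  have h16' : 16 * aeval pMS Q = 16 * (X 10 ^ 18 * aeval ivZ Q) := by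
    have := h16
    simp only [map_mul, map_ofNat] at this
    linear_combination this
  exact mul_left_cancel₀ sixteen_ne h16'

lemma QpPT (Q : MvPolynomial (Fin 10) ℤ)
    (hQ : 16 * Q = disc4 (beta1 * beta5) (beta1 * beta6 + beta2 * beta5) (beta2 * beta6 + beta3 * beta5) (beta3 * beta6 + beta4 * beta5) (beta4 * beta6)) :
    aeval pPT Q = X 10 ^ 12 * aeval ivZ Q := by
  have h16 : aeval pPT (16 * Q) = X 10 ^ 12 * aeval ivZ (16 * Q) := by
    rw [hQ]; exact DpPT
  have h16' : 16 * aeval pPT Q = 16 * (X 10 ^ 12 * aeval ivZ Q) := by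
    have := h16
    simp only [map_mul, map_ofNat] at this
    linear_combination this
  exact mul_left_cancel₀ sixteen_ne h16'

lemma QpMT (Q : MvPolynomial (Fin 10) ℤ)
    (hQ : 16 * Q = disc4 (beta1 * beta5) (beta1 * beta6 + beta2 * beta5) (beta2 * beta6 + beta3 * beta5) (beta3 * beta6 + beta4 * beta5) (beta4 * beta6)) :
    aeval pMT Q = X 10 ^ 12 * aeval ivZ Q := by
  have h16 : aeval pMT (16 * Q) = X 10 ^ 12 * aeval ivZ (16 * Q) := by
    rw [hQ]; exact DpMT
  have h16' : 16 * aeval pMT Q = 16 * (X 10 ^ 12 * aeval ivZ Q) := by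
    have := h16
    simp only [map_mul, map_ofNat] at this
    linear_combination this
  exact mul_left_cancel₀ sixteen_ne h16'

section LLevel
set_option linter.unusedSectionVars false

open MvPolynomial

variable {L : Type*} [Field L]

lemma snoc10 (c : Fin 10 → L) (x : L) : (Fin.snoc c x : Fin 11 → L) 10 = x := rfl
lemma snoc0 (c : Fin 10 → L) (x : L) : (Fin.snoc c x : Fin 11 → L) 0 = c 0 := rfl
lemma snoc1 (c : Fin 10 → L) (x : L) : (Fin.snoc c x : Fin 11 → L) 1 = c 1 := rfl
lemma snoc2 (c : Fin 10 → L) (x : L) : (Fin.snoc c x : Fin 11 → L) 2 = c 2 := rfl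
lemma snoc3 (c : Fin 10 → L) (x : L) : (Fin.snoc c x : Fin 11 → L) 3 = c 3 := rfl
lemma snoc4 (c : Fin 10 → L) (x : L) : (Fin.snoc c x : Fin 11 → L) 4 = c 4 := rfl
lemma snoc5 (c : Fin 10 → L) (x : L) : (Fin.snoc c x : Fin 11 → L) 5 = c 5 := rfl
lemma snoc6 (c : Fin 10 → L) (x : L) : (Fin.snoc c x : Fin 11 → L) 6 = c 6 := rfl
lemma snoc7 (c : Fin 10 → L) (x : L) : (Fin.snoc c x : Fin 11 → L) 7 = c 7 := rfl
lemma snoc8 (c : Fin 10 → L) (x : L) : (Fin.snoc c x : Fin 11 → L) 8 = c 8 := rfl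
lemma snoc9 (c : Fin 10 → L) (x : L) : (Fin.snoc c x : Fin 11 → L) 9 = c 9 := rfl

lemma aeval_aeval' {W : MvPolynomial (Fin 10) ℤ} (p1 : Fin 10 → MvPolynomial (Fin 11) ℤ)
    (y : Fin 11 → L) : aeval y (aeval p1 W) = aeval (fun i => aeval y (p1 i)) W :=
  comp_aeval_apply (f := p1) (φ := (aeval y : MvPolynomial (Fin 11) ℤ →ₐ[ℤ] L)) W

lemma aeval_snoc_ivZ (c : Fin 10 → L) (x : L) :
    (fun i => aeval (Fin.snoc c x : Fin 11 → L) (ivZ i)) = c := by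
  funext i
  fin_cases i <;> simp [ivZ] <;> rfl

variable (Q : MvPolynomial (Fin 10) ℤ)
    (hQ : 16 * Q =
      disc4 (beta1 * beta5) (beta1 * beta6 + beta2 * beta5) (beta2 * beta6 + beta3 * beta5)
        (beta3 * beta6 + beta4 * beta5) (beta4 * beta6))

lemma invL (p1 : Fin 10 → MvPolynomial (Fin 11) ℤ) (hp : aeval p1 Q = aeval ivZ Q)
    (c : Fin 10 → L) (x : L) :
    aeval (fun i => aeval (Fin.snoc c x : Fin 11 → L) (p1 i)) Q = aeval c Q := by
  have h := congrArg (aeval (Fin.snoc c x : Fin 11 → L)) hp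
  rw [aeval_aeval', aeval_aeval', aeval_snoc_ivZ] at h
  exact h

lemma invLs (p1 : Fin 10 → MvPolynomial (Fin 11) ℤ) (m : ℕ)
    (hp : aeval p1 Q = X 10 ^ m * aeval ivZ Q) (c : Fin 10 → L) (x : L) :
    aeval (fun i => aeval (Fin.snoc c x : Fin 11 → L) (p1 i)) Q = x ^ m * aeval c Q := by
  have h := congrArg (aeval (Fin.snoc c x : Fin 11 → L)) hp
  rw [map_mul, map_pow, aeval_X, aeval_aeval', aeval_aeval', aeval_snoc_ivZ, snoc10] at h
  exact h

noncomputable def upF (x : L) (c : Fin 10 → L) : Fin 10 → L :=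
  fun i => aeval (Fin.snoc c x : Fin 11 → L) (pU i)
noncomputable def nupF (x : L) (c : Fin 10 → L) : Fin 10 → L :=
  fun i => aeval (Fin.snoc c x : Fin 11 → L) (pNU i)
noncomputable def nloF (x : L) (c : Fin 10 → L) : Fin 10 → L :=
  fun i => aeval (Fin.snoc c x : Fin 11 → L) (pNL i)
noncomputable def swF (c : Fin 10 → L) : Fin 10 → L :=
  fun i => aeval (Fin.snoc c 0 : Fin 11 → L) (pSW i)
noncomputable def psPF (x : L) (c : Fin 10 → L) : Fin 10 → L :=
  fun i => aeval (Fin.snoc c x : Fin 11 → L) (pPS i)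
noncomputable def psMF (x : L) (c : Fin 10 → L) : Fin 10 → L :=
  fun i => aeval (Fin.snoc c x : Fin 11 → L) (pMS i)
noncomputable def ptPF (x : L) (c : Fin 10 → L) : Fin 10 → L :=
  fun i => aeval (Fin.snoc c x : Fin 11 → L) (pPT i)
noncomputable def ptMF (x : L) (c : Fin 10 → L) : Fin 10 → L :=
  fun i => aeval (Fin.snoc c x : Fin 11 → L) (pMT i)
noncomputable def loF (x : L) (c : Fin 10 → L) : Fin 10 → L := swF (upF x (swF c))

include hQ

lemma inv_upF (x : L) (c : Fin 10 → L) : aeval (upF x c) Q = aeval c Q :=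
  invL Q pU (QpU Q hQ) c x
lemma inv_nupF (x : L) (c : Fin 10 → L) : aeval (nupF x c) Q = aeval c Q :=
  invL Q pNU (QpNU Q hQ) c x
lemma inv_nloF (x : L) (c : Fin 10 → L) : aeval (nloF x c) Q = aeval c Q :=
  invL Q pNL (QpNL Q hQ) c x
lemma inv_swF (c : Fin 10 → L) : aeval (swF c) Q = aeval c Q :=
  invL Q pSW (QpSW Q hQ) c 0
lemma inv_psPF (x : L) (c : Fin 10 → L) : aeval (psPF x c) Q = x ^ 18 * aeval c Q :=
  invLs Q pPS 18 (QpPS Q hQ) c x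
lemma inv_psMF (x : L) (c : Fin 10 → L) : aeval (psMF x c) Q = x ^ 18 * aeval c Q :=
  invLs Q pMS 18 (QpMS Q hQ) c x
lemma inv_ptPF (x : L) (c : Fin 10 → L) : aeval (ptPF x c) Q = x ^ 12 * aeval c Q :=
  invLs Q pPT 12 (QpPT Q hQ) c x
lemma inv_ptMF (x : L) (c : Fin 10 → L) : aeval (ptMF x c) Q = x ^ 12 * aeval c Q :=
  invLs Q pMT 12 (QpMT Q hQ) c x
lemma inv_loF (x : L) (c : Fin 10 → L) : aeval (loF x c) Q = aeval c Q := by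
  rw [loF, inv_swF Q hQ, inv_upF Q hQ, inv_swF Q hQ]

end LLevel

open MvPolynomial
section P3
set_option linter.unusedSectionVars false
set_option maxHeartbeats 1000000
variable {L : Type*} [Field L]

noncomputable def mTF (p q r s : L) (c : Fin 10 → L) : Fin 10 → L
| 0 => p * c 0 + r * c 1
| 1 => q * c 0 + s * c 1
| 2 => p * c 2 + r * c 3
| 3 => q * c 2 + s * c 3
| 4 => p * c 4 + r * c 5
| 5 => q * c 4 + s * c 5
| 6 => p * c 6 + r * c 7
| 7 => q * c 6 + s * c 7
| 8 => c 8
| 9 => c 9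

noncomputable def nTF (p q r s : L) (c : Fin 10 → L) : Fin 10 → L
| 0 => p ^ 2 * c 0 + r ^ 2 * c 2 + p * r * c 6
| 1 => p ^ 2 * c 1 + r ^ 2 * c 3 + p * r * c 7
| 2 => q ^ 2 * c 0 + s ^ 2 * c 2 + q * s * c 6
| 3 => q ^ 2 * c 1 + s ^ 2 * c 3 + q * s * c 7
| 4 => c 4
| 5 => c 5
| 6 => 2 * p * q * c 0 + 2 * r * s * c 2 + (p * s + q * r) * c 6
| 7 => 2 * p * q * c 1 + 2 * r * s * c 3 + (p * s + q * r) * c 7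
| 8 => p * c 8 + r * c 9
| 9 => q * c 8 + s * c 9

noncomputable def scF (al be ga : L) (c : Fin 10 → L) : Fin 10 → L
| 0 => al * c 0
| 1 => al * c 1
| 2 => al * c 2
| 3 => al * c 3
| 4 => be * c 4
| 5 => be * c 5
| 6 => al * c 6
| 7 => al * c 7
| 8 => ga * c 8
| 9 => ga * c 9

lemma mTF_dec_fwd (x r y : L) (c : Fin 10 → L) :
    upF y (loF r (upF x c)) = mTF (x * r + 1) (x + y + x * y * r) r (y * r + 1) c := by
  funext i
  fin_cases i <;>
    simp only [upF, loF, swF, mTF, pU, pSW, map_add, map_mul, aeval_X, snoc0, snoc1, snoc2,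
      snoc3, snoc4, snoc5, snoc6, snoc7, snoc8, snoc9, snoc10] <;>
    ring

lemma nTF_dec_fwd (x r y : L) (c : Fin 10 → L) :
    nupF y (nloF r (nupF x c)) = nTF (x * r + 1) (x + y + x * y * r) r (y * r + 1) c := by
  funext i
  fin_cases i <;>
    simp only [nupF, nloF, nTF, pNU, pNL, map_add, map_mul, map_pow, map_ofNat, aeval_X, snoc0,
      snoc1, snoc2, snoc3, snoc4, snoc5, snoc6, snoc7, snoc8, snoc9, snoc10] <;>
    ring

lemma mTF_dec0 (p q s : L) (c : Fin 10 → L) :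
    loF (-1) (mTF (p + q) q s s c) = mTF p q 0 s c := by
  funext i
  fin_cases i <;>
    simp only [upF, loF, swF, mTF, pU, pSW, map_add, map_mul, aeval_X, snoc0, snoc1, snoc2,
      snoc3, snoc4, snoc5, snoc6, snoc7, snoc8, snoc9, snoc10] <;>
    ring

lemma nTF_dec0 (p q s : L) (c : Fin 10 → L) :
    nloF (-1) (nTF (p + q) q s s c) = nTF p q 0 s c := by
  funext i
  fin_cases i <;>
    simp only [nupF, nloF, nTF, pNU, pNL, map_add, map_mul, map_pow, map_ofNat, map_neg,
      map_one, aeval_X, snoc0, snoc1, snoc2, snoc3, snoc4, snoc5, snoc6, snoc7, snoc8, snoc9,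
      snoc10] <;>
    ring

end P3

section P4
set_option linter.unusedSectionVars false
variable {L : Type*} [Field L]
variable (Q : MvPolynomial (Fin 10) ℤ)
    (hQ : 16 * Q =
      disc4 (beta1 * beta5) (beta1 * beta6 + beta2 * beta5) (beta2 * beta6 + beta3 * beta5)
        (beta3 * beta6 + beta4 * beta5) (beta4 * beta6))
include hQ

lemma inv_mTF_ne (p q r s : L) (hr : r ≠ 0) (hdet : p * s - q * r = 1) (c : Fin 10 → L) :
    aeval (mTF p q r s c) Q = aeval c Q := by
  have e1 : (p - 1) / r * r + 1 = p := by field_simp; ring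
  have e2 : (s - 1) / r * r + 1 = s := by field_simp; ring
  have e3 : (p - 1) / r + (s - 1) / r + (p - 1) / r * ((s - 1) / r) * r = q := by
    field_simp
    linear_combination hdet
  have hdec : mTF p q r s c = upF ((s - 1) / r) (loF r (upF ((p - 1) / r) c)) := by
    rw [mTF_dec_fwd, e1, e2, e3]
  rw [hdec, inv_upF Q hQ, inv_loF Q hQ, inv_upF Q hQ]

lemma inv_mTF (p q r s : L) (hdet : p * s - q * r = 1) (c : Fin 10 → L) :
    aeval (mTF p q r s c) Q = aeval c Q := by
  rcases eq_or_ne r 0 with rfl | hr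
  · have hs : s ≠ 0 := by
      intro h; rw [h] at hdet; simp at hdet
    have hdet' : (p + q) * s - q * s = 1 := by linear_combination hdet
    rw [← mTF_dec0, inv_loF Q hQ, inv_mTF_ne Q hQ _ _ _ _ hs hdet']
  · exact inv_mTF_ne Q hQ _ _ _ _ hr hdet c

lemma inv_nTF_ne (p q r s : L) (hr : r ≠ 0) (hdet : p * s - q * r = 1) (c : Fin 10 → L) :
    aeval (nTF p q r s c) Q = aeval c Q := by
  have e1 : (p - 1) / r * r + 1 = p := by field_simp; ring
  have e2 : (s - 1) / r * r + 1 = s := by field_simp; ring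
  have e3 : (p - 1) / r + (s - 1) / r + (p - 1) / r * ((s - 1) / r) * r = q := by
    field_simp
    linear_combination hdet
  have hdec : nTF p q r s c = nupF ((s - 1) / r) (nloF r (nupF ((p - 1) / r) c)) := by
    rw [nTF_dec_fwd, e1, e2, e3]
  rw [hdec, inv_nupF Q hQ, inv_nloF Q hQ, inv_nupF Q hQ]

lemma inv_nTF (p q r s : L) (hdet : p * s - q * r = 1) (c : Fin 10 → L) :
    aeval (nTF p q r s c) Q = aeval c Q := by
  rcases eq_or_ne r 0 with rfl | hr
  · have hs : s ≠ 0 := by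
      intro h; rw [h] at hdet; simp at hdet
    have hdet' : (p + q) * s - q * s = 1 := by linear_combination hdet
    rw [← nTF_dec0, inv_nloF Q hQ, inv_nTF_ne Q hQ _ _ _ _ hs hdet']
  · exact inv_nTF_ne Q hQ _ _ _ _ hr hdet c

lemma inv_scF (u v : Lˣ) (c : Fin 10 → L) :
    aeval (scF ((u : L))⁻¹ ((u : L) ^ 3 * (v : L) ^ 2) ((v : L))⁻¹ c) Q = aeval c Q := by
  have hd : scF ((u : L))⁻¹ ((u : L) ^ 3 * (v : L) ^ 2) ((v : L))⁻¹ c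
      = psPF (u : L) (psMF ((u : L))⁻¹ (ptPF (v : L) (ptMF ((v : L))⁻¹ c))) := by
    funext i
    fin_cases i <;>
      simp only [scF, psPF, psMF, ptPF, ptMF, pPS, pMS, pPT, pMT, map_mul, map_pow, aeval_X,
        snoc0, snoc1, snoc2, snoc3, snoc4, snoc5, snoc6, snoc7, snoc8, snoc9, snoc10] <;>
      ring
  rw [hd, inv_psPF Q hQ, inv_psMF Q hQ, inv_ptPF Q hQ, inv_ptMF Q hQ]
  have hu : (u : L) ≠ 0 := Units.ne_zero u
  have hv : (v : L) ≠ 0 := Units.ne_zero v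
  field_simp

end P4


end Aux

open MvPolynomial
noncomputable def ptE {L : Type*} [Field L] (xx yy zz tt uu ww : L) : Vars6 → L :=
  Sum.elim (Sum.elim ![xx, yy] (fun _ : Unit => zz)) (Sum.elim ![tt, uu] (fun _ : Unit => ww))


/-
STATEMENT 11: Δ₆ is invariant for the action of G₆ = SL₂(L) × SL₂(L) × Lˣ × Lˣ on V₆:
Δ₆(γ·v) = Δ₆(v) for all γ ∈ G₆ and v ∈ V₆ (the element of V₆ with coordinates c' is
γ·(element with coordinates c)).
-/
theorem Delta6_invariant
    {L : Type*} [Field L] [IsAlgClosed L]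
    (Q : MvPolynomial (Fin 10) ℤ)
    (hQ : 16 * Q =
      disc4 (beta1 * beta5) (beta1 * beta6 + beta2 * beta5) (beta2 * beta6 + beta3 * beta5)
        (beta3 * beta6 + beta4 * beta5) (beta4 * beta6)) :
    ∀ (g : Matrix.SpecialLinearGroup (Fin 2) L × Matrix.SpecialLinearGroup (Fin 2) L × Lˣ × Lˣ)
      (c c' : Fin 10 → L),
      toTriple6 c' = act6 g (toTriple6 c) → Delta6 Q c' = Delta6 Q c := by

  rintro ⟨M, N, s, t⟩ c c' h
  have hdM : M.1 0 0 * M.1 1 1 - M.1 0 1 * M.1 1 0 = 1 := by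
    have h2 := M.2
    rw [Matrix.det_fin_two] at h2
    linear_combination h2
  have hdN : N.1 0 0 * N.1 1 1 - N.1 0 1 * N.1 1 0 = 1 := by
    have h2 := N.2
    rw [Matrix.det_fin_two] at h2
    linear_combination h2
  have h1 := congrArg Prod.fst h
  have h2 := congrArg (fun z => z.2.1) h
  have h3 := congrArg (fun z => z.2.2) h
  simp only [toTriple6, act6] at h1 h2 h3
  have E0 := congrArg (aeval (ptE 1 0 0 1 0 0) : MvPolynomial Vars6 L →ₐ[L] L) h1
  have E1 := congrArg (aeval (ptE 0 1 0 1 0 0) : MvPolynomial Vars6 L →ₐ[L] L) h1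
  have E2 := congrArg (aeval (ptE 1 0 0 0 1 0) : MvPolynomial Vars6 L →ₐ[L] L) h1
  have E3 := congrArg (aeval (ptE 0 1 0 0 1 0) : MvPolynomial Vars6 L →ₐ[L] L) h1
  have E6 := congrArg (aeval (ptE 1 0 0 1 1 0) : MvPolynomial Vars6 L →ₐ[L] L) h1
  have E7 := congrArg (aeval (ptE 0 1 0 1 1 0) : MvPolynomial Vars6 L →ₐ[L] L) h1
  have E4 := congrArg (aeval (ptE 1 0 0 0 0 1) : MvPolynomial Vars6 L →ₐ[L] L) h2
  have E5 := congrArg (aeval (ptE 0 1 0 0 0 1) : MvPolynomial Vars6 L →ₐ[L] L) h2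
  have E8 := congrArg (aeval (ptE 0 0 1 1 0 1) : MvPolynomial Vars6 L →ₐ[L] L) h3
  have E9 := congrArg (aeval (ptE 0 0 1 0 1 1) : MvPolynomial Vars6 L →ₐ[L] L) h3
  simp only [ptE, sub6, map_add, map_mul, map_pow, map_smul, smul_eq_mul, aeval_X, aeval_C,
    Fin.sum_univ_two, Sum.elim_inl, Sum.elim_inr, Matrix.cons_val_zero, Matrix.cons_val_one,
    Matrix.head_cons, mul_one, mul_zero, one_mul, zero_mul, add_zero, zero_add, one_pow,
    zero_pow, ne_eq, OfNat.ofNat_ne_zero, not_false_iff, pow_two, MvPolynomial.algebraMap_eq,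
    Algebra.algebraMap_self_apply]
    at E0 E1 E2 E3 E4 E5 E6 E7 E8 E9
  have hc : c' = scF ((s : L))⁻¹ ((s : L) ^ 3 * (t : L) ^ 2) ((t : L))⁻¹
      (mTF (M.1 0 0) (M.1 0 1) (M.1 1 0) (M.1 1 1)
        (nTF (N.1 0 0) (N.1 0 1) (N.1 1 0) (N.1 1 1) c)) := by
    have hfun : ∀ u v : Fin 10 → L, u 0 = v 0 → u 1 = v 1 → u 2 = v 2 → u 3 = v 3 →
        u 4 = v 4 → u 5 = v 5 → u 6 = v 6 → u 7 = v 7 → u 8 = v 8 → u 9 = v 9 → u = v := by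
      intro u v h0 h1 h2 h3 h4 h5 h6 h7 h8 h9
      funext i
      fin_cases i
      exacts [h0, h1, h2, h3, h4, h5, h6, h7, h8, h9]
    apply hfun
    · simp only [scF, mTF, nTF]; linear_combination E0
    · simp only [scF, mTF, nTF]; linear_combination E1
    · simp only [scF, mTF, nTF]; linear_combination E2
    · simp only [scF, mTF, nTF]; linear_combination E3
    · simp only [scF, mTF, nTF]; linear_combination E4
    · simp only [scF, mTF, nTF]; linear_combination E5
    · simp only [scF, mTF, nTF]; linear_combination E6 - E0 - E2
    · simp only [scF, mTF, nTF]; linear_combination E7 - E1 - E3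
    · simp only [scF, mTF, nTF]; linear_combination E8
    · simp only [scF, mTF, nTF]; linear_combination E9
  show aeval c' Q = aeval c Q
  rw [hc, inv_scF Q hQ s t, inv_mTF Q hQ _ _ _ _ hdM, inv_nTF Q hQ _ _ _ _ hdN]
end

section
/- For every nonzero quadruple (s₁,s₂,s₃,s₄) ∈ ℤ⁴, define the integer weights γ_a = −s₂, γ_b = −s₁−s₂, γ_d = −s₂−2s₃, γ_e = −s₁−s₂−2s₃, γ_g = 2s₁+3s₂+4s₃+2s₄, γ_h = s₁+3s₂+4s₃+2s₄, γ_j = −s₂−s₃, γ_k = −s₁−s₂−s₃, γ_o = −s₄, γ_r = −s₃−s₄. If v ∈ V₆ has coefficients a,b,d,e,g,h,j,k,o,r such that, for every x ∈ {a,b,d,e,g,h,j,k,o,r}, the coefficient x is 0 whenever γ_x < 0, then Δ₆(v) = 0. -/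
set_option maxHeartbeats 4000000


/-
STATEMENT 12 (Lemma 5.3 / `lem-invar6`): for every nonzero (s₁,s₂,s₃,s₄) ∈ ℤ⁴, if all
coordinates of v ∈ V₆ whose weight (with respect to the corresponding cocharacter) is
negative vanish, then Δ₆(v) = 0.  The coordinates c 0,…,c 9 correspond to
a,b,d,e,g,h,j,k,o,r of the paper.
-/

noncomputable def Pfac : MvPolynomial (Fin 10) ℤ := MvPolynomial.X 1 * MvPolynomial.X 3 * MvPolynomial.X 6 ^ 2 - MvPolynomial.X 1 * MvPolynomial.X 2 * MvPolynomial.X 6 * MvPolynomial.X 7 + MvPolynomial.X 1 ^ 2 * MvPolynomial.X 2 ^ 2 - MvPolynomial.X 0 * MvPolynomial.X 3 * MvPolynomial.X 6 * MvPolynomial.X 7 + MvPolynomial.X 0 * MvPolynomial.X 2 * MvPolynomial.X 7 ^ 2 - 2 * MvPolynomial.X 0 * MvPolynomial.X 1 * MvPolynomial.X 2 * MvPolynomial.X 3 + MvPolynomial.X 0 ^ 2 * MvPolynomial.X 3 ^ 2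
noncomputable def Mfac : MvPolynomial (Fin 10) ℤ := -MvPolynomial.X 5 ^ 2 * MvPolynomial.X 6 ^ 2 + 2 * MvPolynomial.X 4 * MvPolynomial.X 5 * MvPolynomial.X 6 * MvPolynomial.X 7 - MvPolynomial.X 4 ^ 2 * MvPolynomial.X 7 ^ 2 + 4 * MvPolynomial.X 1 * MvPolynomial.X 3 * MvPolynomial.X 4 ^ 2 - 4 * MvPolynomial.X 1 * MvPolynomial.X 2 * MvPolynomial.X 4 * MvPolynomial.X 5 - 4 * MvPolynomial.X 0 * MvPolynomial.X 3 * MvPolynomial.X 4 * MvPolynomial.X 5 + 4 * MvPolynomial.X 0 * MvPolynomial.X 2 * MvPolynomial.X 5 ^ 2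
noncomputable def Lfac : MvPolynomial (Fin 10) ℤ := -MvPolynomial.X 5 * MvPolynomial.X 6 * MvPolynomial.X 8 * MvPolynomial.X 9 + MvPolynomial.X 4 * MvPolynomial.X 7 * MvPolynomial.X 8 * MvPolynomial.X 9 - MvPolynomial.X 3 * MvPolynomial.X 4 * MvPolynomial.X 8 ^ 2 + MvPolynomial.X 2 * MvPolynomial.X 5 * MvPolynomial.X 8 ^ 2 - MvPolynomial.X 1 * MvPolynomial.X 4 * MvPolynomial.X 9 ^ 2 + MvPolynomial.X 0 * MvPolynomial.X 5 * MvPolynomial.X 9 ^ 2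
noncomputable def Nfac : MvPolynomial (Fin 10) ℤ := -MvPolynomial.X 3 ^ 2 * MvPolynomial.X 6 ^ 2 * MvPolynomial.X 8 ^ 4 + 2 * MvPolynomial.X 2 * MvPolynomial.X 3 * MvPolynomial.X 6 * MvPolynomial.X 7 * MvPolynomial.X 8 ^ 4 - MvPolynomial.X 2 ^ 2 * MvPolynomial.X 7 ^ 2 * MvPolynomial.X 8 ^ 4 + 2 * MvPolynomial.X 1 * MvPolynomial.X 3 * MvPolynomial.X 6 ^ 2 * MvPolynomial.X 8 ^ 2 * MvPolynomial.X 9 ^ 2 - 2 * MvPolynomial.X 1 * MvPolynomial.X 2 * MvPolynomial.X 6 * MvPolynomial.X 7 * MvPolynomial.X 8 ^ 2 * MvPolynomial.X 9 ^ 2 - 4 * MvPolynomial.X 1 * MvPolynomial.X 2 * MvPolynomial.X 3 * MvPolynomial.X 6 * MvPolynomial.X 8 ^ 3 * MvPolynomial.X 9 + 4 * MvPolynomial.X 1 * MvPolynomial.X 2 ^ 2 * MvPolynomial.X 7 * MvPolynomial.X 8 ^ 3 * MvPolynomial.X 9 - MvPolynomial.X 1 ^ 2 * MvPolynomial.X 6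 ^ 2 * MvPolynomial.X 9 ^ 4 + 4 * MvPolynomial.X 1 ^ 2 * MvPolynomial.X 2 * MvPolynomial.X 6 * MvPolynomial.X 8 * MvPolynomial.X 9 ^ 3 - 4 * MvPolynomial.X 1 ^ 2 * MvPolynomial.X 2 ^ 2 * MvPolynomial.X 8 ^ 2 * MvPolynomial.X 9 ^ 2 - 2 * MvPolynomial.X 0 * MvPolynomial.X 3 * MvPolynomial.X 6 * MvPolynomial.X 7 * MvPolynomial.X 8 ^ 2 * MvPolynomial.X 9 ^ 2 + 4 * MvPolynomial.X 0 * MvPolynomial.X 3 ^ 2 * MvPolynomial.X 6 * MvPolynomial.X 8 ^ 3 * MvPolynomial.X 9 + 2 * MvPolynomial.X 0 * MvPolynomial.X 2 * MvPolynomial.X 7 ^ 2 * MvPolynomial.X 8 ^ 2 * MvPolynomial.X 9 ^ 2 - 4 * MvPolynomial.X 0 * MvPolynomial.X 2 * MvPolynomial.X 3 * MvPolynomial.X 7 * MvPolynomial.X 8 ^ 3 * MvPolynomial.X 9 + 2 * MvPolynomial.X 0 * MvPolynomial.X 1 * MvPolynomial.X 6 * MvPolynomial.X 7 * MvPolynomial.X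 9 ^ 4 - 4 * MvPolynomial.X 0 * MvPolynomial.X 1 * MvPolynomial.X 3 * MvPolynomial.X 6 * MvPolynomial.X 8 * MvPolynomial.X 9 ^ 3 - 4 * MvPolynomial.X 0 * MvPolynomial.X 1 * MvPolynomial.X 2 * MvPolynomial.X 7 * MvPolynomial.X 8 * MvPolynomial.X 9 ^ 3 + 8 * MvPolynomial.X 0 * MvPolynomial.X 1 * MvPolynomial.X 2 * MvPolynomial.X 3 * MvPolynomial.X 8 ^ 2 * MvPolynomial.X 9 ^ 2 - MvPolynomial.X 0 ^ 2 * MvPolynomial.X 7 ^ 2 * MvPolynomial.X 9 ^ 4 + 4 * MvPolynomial.X 0 ^ 2 * MvPolynomial.X 3 * MvPolynomial.X 7 * MvPolynomial.X 8 * MvPolynomial.X 9 ^ 3 - 4 * MvPolynomial.X 0 ^ 2 * MvPolynomial.X 3 ^ 2 * MvPolynomial.X 8 ^ 2 * MvPolynomial.X 9 ^ 2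

lemma disc4_prod {R : Type*} [CommRing R] (b1 b2 b3 b4 b5 b6 : R) :
    disc4 (b1*b5) (b1*b6+b2*b5) (b2*b6+b3*b5) (b3*b6+b4*b5) (b4*b6)
      = (18*b1*b2*b3*b4 - 4*b2^3*b4 + b2^2*b3^2 - 4*b1*b3^3 - 27*b1^2*b4^2)
        * (b1*b6^3 - b2*b5*b6^2 + b3*b5^2*b6 - b4*b5^3)^2 := by
  unfold disc4; ring

lemma disc3_eq : (18*beta1*beta2*beta3*beta4 - 4*beta2^3*beta4 + beta2^2*beta3^2
      - 4*beta1*beta3^3 - 27*beta1^2*beta4^2 : MvPolynomial (Fin 10) ℤ)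
      = 16 * (Pfac * Mfac^2) := by
  simp only [beta1, beta2, beta3, beta4, Pfac, Mfac]; ring

lemma res_eq : (beta1*beta6^3 - beta2*beta5*beta6^2 + beta3*beta5^2*beta6 - beta4*beta5^3
      : MvPolynomial (Fin 10) ℤ) = Lfac * Nfac := by
  simp only [beta1, beta2, beta3, beta4, beta5, beta6, Lfac, Nfac]; ring

theorem Delta6_eq_zero_of_no_negative_weights
    {L : Type*} [Field L] [IsAlgClosed L]
    (Q : MvPolynomial (Fin 10) ℤ)
    (hQ : 16 * Q =
      disc4 (beta1 * beta5) (beta1 * beta6 + beta2 * beta5) (beta2 * beta6 + beta3 * beta5)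
        (beta3 * beta6 + beta4 * beta5) (beta4 * beta6))
    (s₁ s₂ s₃ s₄ : ℤ) (hs : ¬(s₁ = 0 ∧ s₂ = 0 ∧ s₃ = 0 ∧ s₄ = 0))
    (c : Fin 10 → L)
    (h0 : (-s₂ : ℤ) < 0 → c 0 = 0)
    (h1 : (-s₁ - s₂ : ℤ) < 0 → c 1 = 0)
    (h2 : (-s₂ - 2*s₃ : ℤ) < 0 → c 2 = 0)
    (h3 : (-s₁ - s₂ - 2*s₃ : ℤ) < 0 → c 3 = 0)
    (h4 : (2*s₁ + 3*s₂ + 4*s₃ + 2*s₄ : ℤ) < 0 → c 4 = 0)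
    (h5 : (s₁ + 3*s₂ + 4*s₃ + 2*s₄ : ℤ) < 0 → c 5 = 0)
    (h6 : (-s₂ - s₃ : ℤ) < 0 → c 6 = 0)
    (h7 : (-s₁ - s₂ - s₃ : ℤ) < 0 → c 7 = 0)
    (h8 : (-s₄ : ℤ) < 0 → c 8 = 0)
    (h9 : (-s₃ - s₄ : ℤ) < 0 → c 9 = 0) :
    Delta6 Q c = 0 := by
  have hs' : s₁ ≠ 0 ∨ s₂ ≠ 0 ∨ s₃ ≠ 0 ∨ s₄ ≠ 0 := by
    by_contra hcon
    push_neg at hcon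
    exact hs ⟨hcon.1, hcon.2.1, hcon.2.2.1, hcon.2.2.2⟩
  have h16 : (16 : MvPolynomial (Fin 10) ℤ) ≠ 0 := fun h => by
    have h0' := congrArg MvPolynomial.constantCoeff h
    rw [map_ofNat, map_zero] at h0'
    norm_num at h0'
  have hQ' : Q = Pfac * Mfac ^ 2 * Lfac ^ 2 * Nfac ^ 2 := by
    apply mul_left_cancel₀ h16
    rw [hQ, disc4_prod, disc3_eq, res_eq]; ring
  clear hQ hs
  have eP : MvPolynomial.aeval c Pfac = c 1 * c 3 * c 6 ^ 2 - c 1 * c 2 * c 6 * c 7 + c 1 ^ 2 * c 2 ^ 2 - c 0 * c 3 * c 6 * c 7 + c 0 * c 2 * c 7 ^ 2 - 2 * c 0 * c 1 * c 2 * c 3 + c 0 ^ 2 * c 3 ^ 2 := by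
    simp only [Pfac, map_sub, map_add, map_neg, map_mul, map_pow, map_ofNat, MvPolynomial.aeval_X]
    try ring
  have eM : MvPolynomial.aeval c Mfac = -c 5 ^ 2 * c 6 ^ 2 + 2 * c 4 * c 5 * c 6 * c 7 - c 4 ^ 2 * c 7 ^ 2 + 4 * c 1 * c 3 * c 4 ^ 2 - 4 * c 1 * c 2 * c 4 * c 5 - 4 * c 0 * c 3 * c 4 * c 5 + 4 * c 0 * c 2 * c 5 ^ 2 := by
    simp only [Mfac, map_sub, map_add, map_neg, map_mul, map_pow, map_ofNat, MvPolynomial.aeval_X]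
    try ring
  have eL : MvPolynomial.aeval c Lfac = -c 5 * c 6 * c 8 * c 9 + c 4 * c 7 * c 8 * c 9 - c 3 * c 4 * c 8 ^ 2 + c 2 * c 5 * c 8 ^ 2 - c 1 * c 4 * c 9 ^ 2 + c 0 * c 5 * c 9 ^ 2 := by
    simp only [Lfac, map_sub, map_add, map_neg, map_mul, map_pow, map_ofNat, MvPolynomial.aeval_X]
    try ring
  have eN : MvPolynomial.aeval c Nfac = -c 3 ^ 2 * c 6 ^ 2 * c 8 ^ 4 + 2 * c 2 * c 3 * c 6 * c 7 * c 8 ^ 4 - c 2 ^ 2 * c 7 ^ 2 * c 8 ^ 4 + 2 * c 1 * c 3 * c 6 ^ 2 * c 8 ^ 2 * c 9 ^ 2 - 2 * c 1 * c 2 * c 6 * c 7 * c 8 ^ 2 * c 9 ^ 2 - 4 * c 1 * c 2 * c 3 * c 6 * c 8 ^ 3 * c 9 + 4 * c 1 * c 2 ^ 2 * c 7 * c 8 ^ 3 * c 9 - c 1 ^ 2 * c 6 ^ 2 * c 9 ^ 4 + 4 * c 1 ^ 2 * c 2 * c 6 * c 8 * c 9 ^ 3 - 4 * c 1 ^ 2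 * c 2 ^ 2 * c 8 ^ 2 * c 9 ^ 2 - 2 * c 0 * c 3 * c 6 * c 7 * c 8 ^ 2 * c 9 ^ 2 + 4 * c 0 * c 3 ^ 2 * c 6 * c 8 ^ 3 * c 9 + 2 * c 0 * c 2 * c 7 ^ 2 * c 8 ^ 2 * c 9 ^ 2 - 4 * c 0 * c 2 * c 3 * c 7 * c 8 ^ 3 * c 9 + 2 * c 0 * c 1 * c 6 * c 7 * c 9 ^ 4 - 4 * c 0 * c 1 * c 3 * c 6 * c 8 * c 9 ^ 3 - 4 * c 0 * c 1 * c 2 * c 7 * c 8 * c 9 ^ 3 + 8 * c 0 * c 1 * c 2 * c 3 * c 8 ^ 2 * c 9 ^ 2 - c 0 ^ 2 * c 7 ^ 2 * c 9 ^ 4 + 4 * c 0 ^ 2 * c 3 * c 7 * c 8 * c 9 ^ 3 - 4 * c 0 ^ 2 * c 3 ^ 2 * c 8 ^ 2 * c 9 ^ 2 := by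
    simp only [Nfac, map_sub, map_add, map_neg, map_mul, map_pow, map_ofNat, MvPolynomial.aeval_X]
    try ring
  unfold Delta6
  rw [hQ', map_mul, map_mul, map_mul, map_pow, map_pow, map_pow, eP, eM, eL, eN]
  rcases lt_trichotomy (s₁ + 2*s₂ + 2*s₃) 0 with ht | ht | ht
  · -- t < 0 : L factor vanishes
    have hZL1 : -c 5 * c 6 * c 8 * c 9 + c 4 * c 7 * c 8 * c 9 - c 3 * c 4 * c 8 ^ 2 + c 2 * c 5 * c 8 ^ 2 - c 1 * c 4 * c 9 ^ 2 + c 0 * c 5 * c 9 ^ 2 = 0 := by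
      have hmL10 : c 5 * c 6 * c 8 * c 9 = 0 := by
        rcases show s₁ + 3*s₂ + 4*s₃ + 2*s₄ < 0 ∨ -s₂ - s₃ < 0 ∨ -s₄ < 0 ∨ -s₃ - s₄ < 0 by omega with hw | hw | hw | hw
        · rw [h5 hw]; ring
        · rw [h6 hw]; ring
        · rw [h8 hw]; ring
        · rw [h9 hw]; ring
      have hmL11 : c 4 * c 7 * c 8 * c 9 = 0 := by
        rcases show 2*s₁ + 3*s₂ + 4*s₃ + 2*s₄ < 0 ∨ -s₁ - s₂ - s₃ < 0 ∨ -s₄ < 0 ∨ -s₃ - s₄ < 0 by omega with hw | hw | hw | hw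
        · rw [h4 hw]; ring
        · rw [h7 hw]; ring
        · rw [h8 hw]; ring
        · rw [h9 hw]; ring
      have hmL12 : c 3 * c 4 * c 8 ^ 2 = 0 := by
        rcases show -s₁ - s₂ - 2*s₃ < 0 ∨ 2*s₁ + 3*s₂ + 4*s₃ + 2*s₄ < 0 ∨ -s₄ < 0 by omega with hw | hw | hw
        · rw [h3 hw]; ring
        · rw [h4 hw]; ring
        · rw [h8 hw]; ring
      have hmL13 : c 2 * c 5 * c 8 ^ 2 = 0 := by
        rcases show -s₂ - 2*s₃ < 0 ∨ s₁ + 3*s₂ + 4*s₃ + 2*s₄ < 0 ∨ -s₄ < 0 by omega with hw | hw | hw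
        · rw [h2 hw]; ring
        · rw [h5 hw]; ring
        · rw [h8 hw]; ring
      have hmL14 : c 1 * c 4 * c 9 ^ 2 = 0 := by
        rcases show -s₁ - s₂ < 0 ∨ 2*s₁ + 3*s₂ + 4*s₃ + 2*s₄ < 0 ∨ -s₃ - s₄ < 0 by omega with hw | hw | hw
        · rw [h1 hw]; ring
        · rw [h4 hw]; ring
        · rw [h9 hw]; ring
      have hmL15 : c 0 * c 5 * c 9 ^ 2 = 0 := by
        rcases show -s₂ < 0 ∨ s₁ + 3*s₂ + 4*s₃ + 2*s₄ < 0 ∨ -s₃ - s₄ < 0 by omega with hw | hw | hw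
        · rw [h0 hw]; ring
        · rw [h5 hw]; ring
        · rw [h9 hw]; ring
      linear_combination -hmL10 + hmL11 + -hmL12 + hmL13 + -hmL14 + hmL15
    rw [hZL1]; ring
  · rcases lt_trichotomy (2*s₁ + 4*s₂ + 6*s₃ + 4*s₄) 0 with hm | hm | hm
    · -- M factor vanishes
      have hZM1 : -c 5 ^ 2 * c 6 ^ 2 + 2 * c 4 * c 5 * c 6 * c 7 - c 4 ^ 2 * c 7 ^ 2 + 4 * c 1 * c 3 * c 4 ^ 2 - 4 * c 1 * c 2 * c 4 * c 5 - 4 * c 0 * c 3 * c 4 * c 5 + 4 * c 0 * c 2 * c 5 ^ 2 = 0 := by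
        have hmM10 : c 5 ^ 2 * c 6 ^ 2 = 0 := by
          rcases show s₁ + 3*s₂ + 4*s₃ + 2*s₄ < 0 ∨ -s₂ - s₃ < 0 by omega with hw | hw
          · rw [h5 hw]; ring
          · rw [h6 hw]; ring
        have hmM11 : c 4 * c 5 * c 6 * c 7 = 0 := by
          rcases show 2*s₁ + 3*s₂ + 4*s₃ + 2*s₄ < 0 ∨ s₁ + 3*s₂ + 4*s₃ + 2*s₄ < 0 ∨ -s₂ - s₃ < 0 ∨ -s₁ - s₂ - s₃ < 0 by omega with hw | hw | hw | hw
          · rw [h4 hw]; ring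
          · rw [h5 hw]; ring
          · rw [h6 hw]; ring
          · rw [h7 hw]; ring
        have hmM12 : c 4 ^ 2 * c 7 ^ 2 = 0 := by
          rcases show 2*s₁ + 3*s₂ + 4*s₃ + 2*s₄ < 0 ∨ -s₁ - s₂ - s₃ < 0 by omega with hw | hw
          · rw [h4 hw]; ring
          · rw [h7 hw]; ring
        have hmM13 : c 1 * c 3 * c 4 ^ 2 = 0 := by
          rcases show -s₁ - s₂ < 0 ∨ -s₁ - s₂ - 2*s₃ < 0 ∨ 2*s₁ + 3*s₂ + 4*s₃ + 2*s₄ < 0 by omega with hw | hw | hw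
          · rw [h1 hw]; ring
          · rw [h3 hw]; ring
          · rw [h4 hw]; ring
        have hmM14 : c 1 * c 2 * c 4 * c 5 = 0 := by
          rcases show -s₁ - s₂ < 0 ∨ -s₂ - 2*s₃ < 0 ∨ 2*s₁ + 3*s₂ + 4*s₃ + 2*s₄ < 0 ∨ s₁ + 3*s₂ + 4*s₃ + 2*s₄ < 0 by omega with hw | hw | hw | hw
          · rw [h1 hw]; ring
          · rw [h2 hw]; ring
          · rw [h4 hw]; ring
          · rw [h5 hw]; ring
        have hmM15 : c 0 * c 3 * c 4 * c 5 = 0 := by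
          rcases show -s₂ < 0 ∨ -s₁ - s₂ - 2*s₃ < 0 ∨ 2*s₁ + 3*s₂ + 4*s₃ + 2*s₄ < 0 ∨ s₁ + 3*s₂ + 4*s₃ + 2*s₄ < 0 by omega with hw | hw | hw | hw
          · rw [h0 hw]; ring
          · rw [h3 hw]; ring
          · rw [h4 hw]; ring
          · rw [h5 hw]; ring
        have hmM16 : c 0 * c 2 * c 5 ^ 2 = 0 := by
          rcases show -s₂ < 0 ∨ -s₂ - 2*s₃ < 0 ∨ s₁ + 3*s₂ + 4*s₃ + 2*s₄ < 0 by omega with hw | hw | hw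
          · rw [h0 hw]; ring
          · rw [h2 hw]; ring
          · rw [h5 hw]; ring
        linear_combination -hmM10 + (2) * hmM11 + -hmM12 + (4) * hmM13 + (-4) * hmM14 + (-4) * hmM15 + (4) * hmM16
      rw [hZM1]; ring
    · by_cases h4' : s₄ = 0
      · -- P factor vanishes
        have hZP2 : c 1 * c 3 * c 6 ^ 2 - c 1 * c 2 * c 6 * c 7 + c 1 ^ 2 * c 2 ^ 2 - c 0 * c 3 * c 6 * c 7 + c 0 * c 2 * c 7 ^ 2 - 2 * c 0 * c 1 * c 2 * c 3 + c 0 ^ 2 * c 3 ^ 2 = 0 := by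
          have hmP20 : c 1 * c 3 * c 6 ^ 2 = 0 := by
            rcases show -s₁ - s₂ < 0 ∨ -s₁ - s₂ - 2*s₃ < 0 ∨ -s₂ - s₃ < 0 by omega with hw | hw | hw
            · rw [h1 hw]; ring
            · rw [h3 hw]; ring
            · rw [h6 hw]; ring
          have hmP21 : c 1 * c 2 * c 6 * c 7 = 0 := by
            rcases show -s₁ - s₂ < 0 ∨ -s₂ - 2*s₃ < 0 ∨ -s₂ - s₃ < 0 ∨ -s₁ - s₂ - s₃ < 0 by omega with hw | hw | hw | hw
            · rw [h1 hw]; ring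
            · rw [h2 hw]; ring
            · rw [h6 hw]; ring
            · rw [h7 hw]; ring
          have hmP22 : c 1 ^ 2 * c 2 ^ 2 = 0 := by
            rcases show -s₁ - s₂ < 0 ∨ -s₂ - 2*s₃ < 0 by omega with hw | hw
            · rw [h1 hw]; ring
            · rw [h2 hw]; ring
          have hmP23 : c 0 * c 3 * c 6 * c 7 = 0 := by
            rcases show -s₂ < 0 ∨ -s₁ - s₂ - 2*s₃ < 0 ∨ -s₂ - s₃ < 0 ∨ -s₁ - s₂ - s₃ < 0 by omega with hw | hw | hw | hw
            · rw [h0 hw]; ring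
            · rw [h3 hw]; ring
            · rw [h6 hw]; ring
            · rw [h7 hw]; ring
          have hmP24 : c 0 * c 2 * c 7 ^ 2 = 0 := by
            rcases show -s₂ < 0 ∨ -s₂ - 2*s₃ < 0 ∨ -s₁ - s₂ - s₃ < 0 by omega with hw | hw | hw
            · rw [h0 hw]; ring
            · rw [h2 hw]; ring
            · rw [h7 hw]; ring
          have hmP25 : c 0 * c 1 * c 2 * c 3 = 0 := by
            rcases show -s₂ < 0 ∨ -s₁ - s₂ < 0 ∨ -s₂ - 2*s₃ < 0 ∨ -s₁ - s₂ - 2*s₃ < 0 by omega with hw | hw | hw | hw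
            · rw [h0 hw]; ring
            · rw [h1 hw]; ring
            · rw [h2 hw]; ring
            · rw [h3 hw]; ring
          have hmP26 : c 0 ^ 2 * c 3 ^ 2 = 0 := by
            rcases show -s₂ < 0 ∨ -s₁ - s₂ - 2*s₃ < 0 by omega with hw | hw
            · rw [h0 hw]; ring
            · rw [h3 hw]; ring
          linear_combination hmP20 + -hmP21 + hmP22 + -hmP23 + hmP24 + (-2) * hmP25 + hmP26
        rw [hZP2]; ring
      · -- L factor vanishes
        have hZL2 : -c 5 * c 6 * c 8 * c 9 + c 4 * c 7 * c 8 * c 9 - c 3 * c 4 * c 8 ^ 2 + c 2 * c 5 * c 8 ^ 2 - c 1 * c 4 * c 9 ^ 2 + c 0 * c 5 * c 9 ^ 2 = 0 := by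
          have hmL20 : c 5 * c 6 * c 8 * c 9 = 0 := by
            rcases show s₁ + 3*s₂ + 4*s₃ + 2*s₄ < 0 ∨ -s₂ - s₃ < 0 ∨ -s₄ < 0 ∨ -s₃ - s₄ < 0 by omega with hw | hw | hw | hw
            · rw [h5 hw]; ring
            · rw [h6 hw]; ring
            · rw [h8 hw]; ring
            · rw [h9 hw]; ring
          have hmL21 : c 4 * c 7 * c 8 * c 9 = 0 := by
            rcases show 2*s₁ + 3*s₂ + 4*s₃ + 2*s₄ < 0 ∨ -s₁ - s₂ - s₃ < 0 ∨ -s₄ < 0 ∨ -s₃ - s₄ < 0 by omega with hw | hw | hw | hw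
            · rw [h4 hw]; ring
            · rw [h7 hw]; ring
            · rw [h8 hw]; ring
            · rw [h9 hw]; ring
          have hmL22 : c 3 * c 4 * c 8 ^ 2 = 0 := by
            rcases show -s₁ - s₂ - 2*s₃ < 0 ∨ 2*s₁ + 3*s₂ + 4*s₃ + 2*s₄ < 0 ∨ -s₄ < 0 by omega with hw | hw | hw
            · rw [h3 hw]; ring
            · rw [h4 hw]; ring
            · rw [h8 hw]; ring
          have hmL23 : c 2 * c 5 * c 8 ^ 2 = 0 := by
            rcases show -s₂ - 2*s₃ < 0 ∨ s₁ + 3*s₂ + 4*s₃ + 2*s₄ < 0 ∨ -s₄ < 0 by omega with hw | hw | hw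
            · rw [h2 hw]; ring
            · rw [h5 hw]; ring
            · rw [h8 hw]; ring
          have hmL24 : c 1 * c 4 * c 9 ^ 2 = 0 := by
            rcases show -s₁ - s₂ < 0 ∨ 2*s₁ + 3*s₂ + 4*s₃ + 2*s₄ < 0 ∨ -s₃ - s₄ < 0 by omega with hw | hw | hw
            · rw [h1 hw]; ring
            · rw [h4 hw]; ring
            · rw [h9 hw]; ring
          have hmL25 : c 0 * c 5 * c 9 ^ 2 = 0 := by
            rcases show -s₂ < 0 ∨ s₁ + 3*s₂ + 4*s₃ + 2*s₄ < 0 ∨ -s₃ - s₄ < 0 by omega with hw | hw | hw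
            · rw [h0 hw]; ring
            · rw [h5 hw]; ring
            · rw [h9 hw]; ring
          linear_combination -hmL20 + hmL21 + -hmL22 + hmL23 + -hmL24 + hmL25
        rw [hZL2]; ring
    · -- N factor vanishes
      have hZN1 : -c 3 ^ 2 * c 6 ^ 2 * c 8 ^ 4 + 2 * c 2 * c 3 * c 6 * c 7 * c 8 ^ 4 - c 2 ^ 2 * c 7 ^ 2 * c 8 ^ 4 + 2 * c 1 * c 3 * c 6 ^ 2 * c 8 ^ 2 * c 9 ^ 2 - 2 * c 1 * c 2 * c 6 * c 7 * c 8 ^ 2 * c 9 ^ 2 - 4 * c 1 * c 2 * c 3 * c 6 * c 8 ^ 3 * c 9 + 4 * c 1 * c 2 ^ 2 * c 7 * c 8 ^ 3 * c 9 - c 1 ^ 2 * c 6 ^ 2 * c 9 ^ 4 + 4 * c 1 ^ 2 * c 2 * c 6 * c 8 * c 9 ^ 3 - 4 * c 1 ^ 2 * c 2 ^ 2 * c 8 ^ 2 * c 9 ^ 2 - 2 * c 0 * c 3 * c 6 * c 7 * c 8 ^ 2 * c 9 ^ 2 + 4 * c 0 * c 3 ^ 2 * c 6 * c 8 ^ 3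 * c 9 + 2 * c 0 * c 2 * c 7 ^ 2 * c 8 ^ 2 * c 9 ^ 2 - 4 * c 0 * c 2 * c 3 * c 7 * c 8 ^ 3 * c 9 + 2 * c 0 * c 1 * c 6 * c 7 * c 9 ^ 4 - 4 * c 0 * c 1 * c 3 * c 6 * c 8 * c 9 ^ 3 - 4 * c 0 * c 1 * c 2 * c 7 * c 8 * c 9 ^ 3 + 8 * c 0 * c 1 * c 2 * c 3 * c 8 ^ 2 * c 9 ^ 2 - c 0 ^ 2 * c 7 ^ 2 * c 9 ^ 4 + 4 * c 0 ^ 2 * c 3 * c 7 * c 8 * c 9 ^ 3 - 4 * c 0 ^ 2 * c 3 ^ 2 * c 8 ^ 2 * c 9 ^ 2 = 0 := by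
        have hmN10 : c 3 ^ 2 * c 6 ^ 2 * c 8 ^ 4 = 0 := by
          rcases show -s₁ - s₂ - 2*s₃ < 0 ∨ -s₂ - s₃ < 0 ∨ -s₄ < 0 by omega with hw | hw | hw
          · rw [h3 hw]; ring
          · rw [h6 hw]; ring
          · rw [h8 hw]; ring
        have hmN11 : c 2 * c 3 * c 6 * c 7 * c 8 ^ 4 = 0 := by
          rcases show -s₂ - 2*s₃ < 0 ∨ -s₁ - s₂ - 2*s₃ < 0 ∨ -s₂ - s₃ < 0 ∨ -s₁ - s₂ - s₃ < 0 ∨ -s₄ < 0 by omega with hw | hw | hw | hw | hw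
          · rw [h2 hw]; ring
          · rw [h3 hw]; ring
          · rw [h6 hw]; ring
          · rw [h7 hw]; ring
          · rw [h8 hw]; ring
        have hmN12 : c 2 ^ 2 * c 7 ^ 2 * c 8 ^ 4 = 0 := by
          rcases show -s₂ - 2*s₃ < 0 ∨ -s₁ - s₂ - s₃ < 0 ∨ -s₄ < 0 by omega with hw | hw | hw
          · rw [h2 hw]; ring
          · rw [h7 hw]; ring
          · rw [h8 hw]; ring
        have hmN13 : c 1 * c 3 * c 6 ^ 2 * c 8 ^ 2 * c 9 ^ 2 = 0 := by
          rcases show -s₁ - s₂ < 0 ∨ -s₁ - s₂ - 2*s₃ < 0 ∨ -s₂ - s₃ < 0 ∨ -s₄ < 0 ∨ -s₃ - s₄ < 0 by omega with hw | hw | hw | hw | hw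
          · rw [h1 hw]; ring
          · rw [h3 hw]; ring
          · rw [h6 hw]; ring
          · rw [h8 hw]; ring
          · rw [h9 hw]; ring
        have hmN14 : c 1 * c 2 * c 6 * c 7 * c 8 ^ 2 * c 9 ^ 2 = 0 := by
          rcases show -s₁ - s₂ < 0 ∨ -s₂ - 2*s₃ < 0 ∨ -s₂ - s₃ < 0 ∨ -s₁ - s₂ - s₃ < 0 ∨ -s₄ < 0 ∨ -s₃ - s₄ < 0 by omega with hw | hw | hw | hw | hw | hw
          · rw [h1 hw]; ring
          · rw [h2 hw]; ring
          · rw [h6 hw]; ring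
          · rw [h7 hw]; ring
          · rw [h8 hw]; ring
          · rw [h9 hw]; ring
        have hmN15 : c 1 * c 2 * c 3 * c 6 * c 8 ^ 3 * c 9 = 0 := by
          rcases show -s₁ - s₂ < 0 ∨ -s₂ - 2*s₃ < 0 ∨ -s₁ - s₂ - 2*s₃ < 0 ∨ -s₂ - s₃ < 0 ∨ -s₄ < 0 ∨ -s₃ - s₄ < 0 by omega with hw | hw | hw | hw | hw | hw
          · rw [h1 hw]; ring
          · rw [h2 hw]; ring
          · rw [h3 hw]; ring
          · rw [h6 hw]; ring
          · rw [h8 hw]; ring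
          · rw [h9 hw]; ring
        have hmN16 : c 1 * c 2 ^ 2 * c 7 * c 8 ^ 3 * c 9 = 0 := by
          rcases show -s₁ - s₂ < 0 ∨ -s₂ - 2*s₃ < 0 ∨ -s₁ - s₂ - s₃ < 0 ∨ -s₄ < 0 ∨ -s₃ - s₄ < 0 by omega with hw | hw | hw | hw | hw
          · rw [h1 hw]; ring
          · rw [h2 hw]; ring
          · rw [h7 hw]; ring
          · rw [h8 hw]; ring
          · rw [h9 hw]; ring
        have hmN17 : c 1 ^ 2 * c 6 ^ 2 * c 9 ^ 4 = 0 := by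
          rcases show -s₁ - s₂ < 0 ∨ -s₂ - s₃ < 0 ∨ -s₃ - s₄ < 0 by omega with hw | hw | hw
          · rw [h1 hw]; ring
          · rw [h6 hw]; ring
          · rw [h9 hw]; ring
        have hmN18 : c 1 ^ 2 * c 2 * c 6 * c 8 * c 9 ^ 3 = 0 := by
          rcases show -s₁ - s₂ < 0 ∨ -s₂ - 2*s₃ < 0 ∨ -s₂ - s₃ < 0 ∨ -s₄ < 0 ∨ -s₃ - s₄ < 0 by omega with hw | hw | hw | hw | hw
          · rw [h1 hw]; ring
          · rw [h2 hw]; ring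
          · rw [h6 hw]; ring
          · rw [h8 hw]; ring
          · rw [h9 hw]; ring
        have hmN19 : c 1 ^ 2 * c 2 ^ 2 * c 8 ^ 2 * c 9 ^ 2 = 0 := by
          rcases show -s₁ - s₂ < 0 ∨ -s₂ - 2*s₃ < 0 ∨ -s₄ < 0 ∨ -s₃ - s₄ < 0 by omega with hw | hw | hw | hw
          · rw [h1 hw]; ring
          · rw [h2 hw]; ring
          · rw [h8 hw]; ring
          · rw [h9 hw]; ring
        have hmN110 : c 0 * c 3 * c 6 * c 7 * c 8 ^ 2 * c 9 ^ 2 = 0 := by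
          rcases show -s₂ < 0 ∨ -s₁ - s₂ - 2*s₃ < 0 ∨ -s₂ - s₃ < 0 ∨ -s₁ - s₂ - s₃ < 0 ∨ -s₄ < 0 ∨ -s₃ - s₄ < 0 by omega with hw | hw | hw | hw | hw | hw
          · rw [h0 hw]; ring
          · rw [h3 hw]; ring
          · rw [h6 hw]; ring
          · rw [h7 hw]; ring
          · rw [h8 hw]; ring
          · rw [h9 hw]; ring
        have hmN111 : c 0 * c 3 ^ 2 * c 6 * c 8 ^ 3 * c 9 = 0 := by
          rcases show -s₂ < 0 ∨ -s₁ - s₂ - 2*s₃ < 0 ∨ -s₂ - s₃ < 0 ∨ -s₄ < 0 ∨ -s₃ - s₄ < 0 by omega with hw | hw | hw | hw | hw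
          · rw [h0 hw]; ring
          · rw [h3 hw]; ring
          · rw [h6 hw]; ring
          · rw [h8 hw]; ring
          · rw [h9 hw]; ring
        have hmN112 : c 0 * c 2 * c 7 ^ 2 * c 8 ^ 2 * c 9 ^ 2 = 0 := by
          rcases show -s₂ < 0 ∨ -s₂ - 2*s₃ < 0 ∨ -s₁ - s₂ - s₃ < 0 ∨ -s₄ < 0 ∨ -s₃ - s₄ < 0 by omega with hw | hw | hw | hw | hw
          · rw [h0 hw]; ring
          · rw [h2 hw]; ring
          · rw [h7 hw]; ring
          · rw [h8 hw]; ring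
          · rw [h9 hw]; ring
        have hmN113 : c 0 * c 2 * c 3 * c 7 * c 8 ^ 3 * c 9 = 0 := by
          rcases show -s₂ < 0 ∨ -s₂ - 2*s₃ < 0 ∨ -s₁ - s₂ - 2*s₃ < 0 ∨ -s₁ - s₂ - s₃ < 0 ∨ -s₄ < 0 ∨ -s₃ - s₄ < 0 by omega with hw | hw | hw | hw | hw | hw
          · rw [h0 hw]; ring
          · rw [h2 hw]; ring
          · rw [h3 hw]; ring
          · rw [h7 hw]; ring
          · rw [h8 hw]; ring
          · rw [h9 hw]; ring
        have hmN114 : c 0 * c 1 * c 6 * c 7 * c 9 ^ 4 = 0 := by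
          rcases show -s₂ < 0 ∨ -s₁ - s₂ < 0 ∨ -s₂ - s₃ < 0 ∨ -s₁ - s₂ - s₃ < 0 ∨ -s₃ - s₄ < 0 by omega with hw | hw | hw | hw | hw
          · rw [h0 hw]; ring
          · rw [h1 hw]; ring
          · rw [h6 hw]; ring
          · rw [h7 hw]; ring
          · rw [h9 hw]; ring
        have hmN115 : c 0 * c 1 * c 3 * c 6 * c 8 * c 9 ^ 3 = 0 := by
          rcases show -s₂ < 0 ∨ -s₁ - s₂ < 0 ∨ -s₁ - s₂ - 2*s₃ < 0 ∨ -s₂ - s₃ < 0 ∨ -s₄ < 0 ∨ -s₃ - s₄ < 0 by omega with hw | hw | hw | hw | hw | hw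
          · rw [h0 hw]; ring
          · rw [h1 hw]; ring
          · rw [h3 hw]; ring
          · rw [h6 hw]; ring
          · rw [h8 hw]; ring
          · rw [h9 hw]; ring
        have hmN116 : c 0 * c 1 * c 2 * c 7 * c 8 * c 9 ^ 3 = 0 := by
          rcases show -s₂ < 0 ∨ -s₁ - s₂ < 0 ∨ -s₂ - 2*s₃ < 0 ∨ -s₁ - s₂ - s₃ < 0 ∨ -s₄ < 0 ∨ -s₃ - s₄ < 0 by omega with hw | hw | hw | hw | hw | hw
          · rw [h0 hw]; ring
          · rw [h1 hw]; ring
          · rw [h2 hw]; ring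
          · rw [h7 hw]; ring
          · rw [h8 hw]; ring
          · rw [h9 hw]; ring
        have hmN117 : c 0 * c 1 * c 2 * c 3 * c 8 ^ 2 * c 9 ^ 2 = 0 := by
          rcases show -s₂ < 0 ∨ -s₁ - s₂ < 0 ∨ -s₂ - 2*s₃ < 0 ∨ -s₁ - s₂ - 2*s₃ < 0 ∨ -s₄ < 0 ∨ -s₃ - s₄ < 0 by omega with hw | hw | hw | hw | hw | hw
          · rw [h0 hw]; ring
          · rw [h1 hw]; ring
          · rw [h2 hw]; ring
          · rw [h3 hw]; ring
          · rw [h8 hw]; ring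
          · rw [h9 hw]; ring
        have hmN118 : c 0 ^ 2 * c 7 ^ 2 * c 9 ^ 4 = 0 := by
          rcases show -s₂ < 0 ∨ -s₁ - s₂ - s₃ < 0 ∨ -s₃ - s₄ < 0 by omega with hw | hw | hw
          · rw [h0 hw]; ring
          · rw [h7 hw]; ring
          · rw [h9 hw]; ring
        have hmN119 : c 0 ^ 2 * c 3 * c 7 * c 8 * c 9 ^ 3 = 0 := by
          rcases show -s₂ < 0 ∨ -s₁ - s₂ - 2*s₃ < 0 ∨ -s₁ - s₂ - s₃ < 0 ∨ -s₄ < 0 ∨ -s₃ - s₄ < 0 by omega with hw | hw | hw | hw | hw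
          · rw [h0 hw]; ring
          · rw [h3 hw]; ring
          · rw [h7 hw]; ring
          · rw [h8 hw]; ring
          · rw [h9 hw]; ring
        have hmN120 : c 0 ^ 2 * c 3 ^ 2 * c 8 ^ 2 * c 9 ^ 2 = 0 := by
          rcases show -s₂ < 0 ∨ -s₁ - s₂ - 2*s₃ < 0 ∨ -s₄ < 0 ∨ -s₃ - s₄ < 0 by omega with hw | hw | hw | hw
          · rw [h0 hw]; ring
          · rw [h3 hw]; ring
          · rw [h8 hw]; ring
          · rw [h9 hw]; ring
        linear_combination -hmN10 + (2) * hmN11 + -hmN12 + (2) * hmN13 + (-2) * hmN14 + (-4) * hmN15 + (4) * hmN16 + -hmN17 + (4) * hmN18 + (-4) * hmN19 + (-2) * hmN110 + (4) * hmN111 + (2) * hmN112 + (-4) * hmN113 + (2) * hmN114 + (-4) * hmN115 + (-4) * hmN116 + (8) * hmN117 + -hmN118 + (4) * hmN119 + (-4) * hmN120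
      rw [hZN1]; ring
  · -- t > 0 : P factor vanishes
    have hZP1 : c 1 * c 3 * c 6 ^ 2 - c 1 * c 2 * c 6 * c 7 + c 1 ^ 2 * c 2 ^ 2 - c 0 * c 3 * c 6 * c 7 + c 0 * c 2 * c 7 ^ 2 - 2 * c 0 * c 1 * c 2 * c 3 + c 0 ^ 2 * c 3 ^ 2 = 0 := by
      have hmP10 : c 1 * c 3 * c 6 ^ 2 = 0 := by
        rcases show -s₁ - s₂ < 0 ∨ -s₁ - s₂ - 2*s₃ < 0 ∨ -s₂ - s₃ < 0 by omega with hw | hw | hw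
        · rw [h1 hw]; ring
        · rw [h3 hw]; ring
        · rw [h6 hw]; ring
      have hmP11 : c 1 * c 2 * c 6 * c 7 = 0 := by
        rcases show -s₁ - s₂ < 0 ∨ -s₂ - 2*s₃ < 0 ∨ -s₂ - s₃ < 0 ∨ -s₁ - s₂ - s₃ < 0 by omega with hw | hw | hw | hw
        · rw [h1 hw]; ring
        · rw [h2 hw]; ring
        · rw [h6 hw]; ring
        · rw [h7 hw]; ring
      have hmP12 : c 1 ^ 2 * c 2 ^ 2 = 0 := by
        rcases show -s₁ - s₂ < 0 ∨ -s₂ - 2*s₃ < 0 by omega with hw | hw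
        · rw [h1 hw]; ring
        · rw [h2 hw]; ring
      have hmP13 : c 0 * c 3 * c 6 * c 7 = 0 := by
        rcases show -s₂ < 0 ∨ -s₁ - s₂ - 2*s₃ < 0 ∨ -s₂ - s₃ < 0 ∨ -s₁ - s₂ - s₃ < 0 by omega with hw | hw | hw | hw
        · rw [h0 hw]; ring
        · rw [h3 hw]; ring
        · rw [h6 hw]; ring
        · rw [h7 hw]; ring
      have hmP14 : c 0 * c 2 * c 7 ^ 2 = 0 := by
        rcases show -s₂ < 0 ∨ -s₂ - 2*s₃ < 0 ∨ -s₁ - s₂ - s₃ < 0 by omega with hw | hw | hw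
        · rw [h0 hw]; ring
        · rw [h2 hw]; ring
        · rw [h7 hw]; ring
      have hmP15 : c 0 * c 1 * c 2 * c 3 = 0 := by
        rcases show -s₂ < 0 ∨ -s₁ - s₂ < 0 ∨ -s₂ - 2*s₃ < 0 ∨ -s₁ - s₂ - 2*s₃ < 0 by omega with hw | hw | hw | hw
        · rw [h0 hw]; ring
        · rw [h1 hw]; ring
        · rw [h2 hw]; ring
        · rw [h3 hw]; ring
      have hmP16 : c 0 ^ 2 * c 3 ^ 2 = 0 := by
        rcases show -s₂ < 0 ∨ -s₁ - s₂ - 2*s₃ < 0 by omega with hw | hw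
        · rw [h0 hw]; ring
        · rw [h3 hw]; ring
      linear_combination hmP10 + -hmP11 + hmP12 + -hmP13 + hmP14 + (-2) * hmP15 + hmP16
    rw [hZP1]; ring
end
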